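/- arXiv:2012.02277 — 6 statements merged into one kernel-verified Lean document; each statement's English description precedes it below -/
import Mathlib

section
/- Let r>0, ρ>0, α∈(0,1], z>0 and w∈ℝ. Let C:[0,∞)→[0,∞) be measurable and locally integrable, let Z be the habit process with Z(0)=z, and assume C(t) ≥ α·Z(t) for all t≥0. Let W be the wealth process with W(0)=w. Then W(t) > 0 for all t ≥ 0 if and only if W(t) ≥ x̲·Z(t) for all t ≥ 0, where x̲ := α/(r+ρ(1−α)) is the safe level. -/
/-!
Discounting by `e^{-rt}` turns the wealth equation into `e^{-rt} W(t) = w - ∫₀ᵗ e^{-ru} C(u) du`,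
and `C ≥ α Z` makes `e^{ρ(1-α)t} Z(t)` nondecreasing; both are instances of the product rule for
`e^{ct}` times an absolutely continuous function. If `W(t₀) < x̲ Z(t₀)`, consumption after `t₀` is
at least `α Z(t₀) e^{-ρ(1-α)(u-t₀)}`, whose discounted cost over `[t₀, ∞)` is exactly
`e^{-rt₀} x̲ Z(t₀)`, so the discounted wealth eventually becomes negative. Conversely `x̲ Z > 0`.
-/

open Real Set MeasureTheory Filter Topology

theorem exp_mul_mul_sub_eq_integral {X f : ℝ → ℝ} {a b : ℝ} (c : ℝ)
    (hf : IntervalIntegrable f volume a b)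
    (hX : ∀ u ∈ uIcc a b, X u = X a + ∫ v in a..u, f v) :
    exp (c * b) * X b - exp (c * a) * X a = ∫ u in a..b, exp (c * u) * (f u + c * X u) := by
  set P : ℝ → ℝ := fun x ↦ X a + ∫ v in a..x, f v
  have hE : AbsolutelyContinuousOnInterval (fun x ↦ exp (c * x)) a b :=
    ContDiffOn.absolutelyContinuousOnInterval (by fun_prop)
  have hP : AbsolutelyContinuousOnInterval P a b :=
    (contDiffOn_const.absolutelyContinuousOnInterval).fun_add
      (hf.absolutelyContinuousOnInterval_intervalIntegral left_mem_uIcc)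
  have hPa : P a = X a := by simp [P]
  rw [show X b = P b from hX b right_mem_uIcc, ← hPa, ← hE.integral_deriv_mul_eq_sub hP]
  apply intervalIntegral.integral_congr_ae
  filter_upwards [hf.ae_hasDerivAt_integral] with x hP' hx
  have hx' : x ∈ uIcc a b := uIoc_subset_uIcc hx
  have hE' : deriv (fun x ↦ exp (c * x)) x = exp (c * x) * c := by
    simpa using ((hasDerivAt_id x).const_mul c).exp.deriv
  rw [hE', ((hP' hx' a left_mem_uIcc).const_add (X a)).deriv, show P x = X x from (hX x hx').symm]
  ring

theorem intervalIntegrable_mul_of_integrableOn_Icc {g C : ℝ → ℝ} {a b : ℝ} (hg : Continuous g)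
    (hC : IntegrableOn C (Icc 0 b)) (ha : 0 ≤ a) (hab : a ≤ b) :
    IntervalIntegrable (fun u ↦ g u * C u) volume a b :=
  (intervalIntegrable_iff_integrableOn_Icc_of_le hab).2 <|
    (hC.continuousOn_mul hg.continuousOn isCompact_Icc).mono_set (Icc_subset_Icc_left ha)

section Wealth

variable {r w : ℝ} {C W : ℝ → ℝ}

theorem exp_neg_mul_mul_wealth_eq {t : ℝ}
    (hW : ∀ t, 0 ≤ t → W t = w + ∫ u in (0:ℝ)..t, (r * W u - C u)) (ht : 0 ≤ t)
    (hf : IntegrableOn (fun u ↦ r * W u - C u) (Icc 0 t)) :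
    exp (-r * t) * W t = w - ∫ u in (0:ℝ)..t, exp (-r * u) * C u := by
  have hW₀ : W 0 = w := by simpa using hW 0 le_rfl
  have hX : ∀ u ∈ uIcc 0 t, W u = W 0 + ∫ v in (0:ℝ)..u, (r * W v - C v) := fun u hu ↦ by
    rw [hW₀, hW u (uIcc_of_le ht ▸ hu).1]
  have key := exp_mul_mul_sub_eq_integral (-r)
    ((intervalIntegrable_iff_integrableOn_Icc_of_le ht).2 hf) hX
  rw [mul_zero, exp_zero, one_mul, hW₀] at key
  rw [sub_eq_iff_eq_add'.1 key, sub_eq_add_neg, ← intervalIntegral.integral_neg]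
  congr 1
  exact intervalIntegral.integral_congr fun u _ ↦ by ring

/-- `hW` constrains `W` only through the interval integral, which is `0` for a non-integrable
integrand. Below the supremum `τ` of the horizons with integrable drift, `W` is the explicit
continuous solution, so the drift is integrable up to `τ`; above `τ`, `W` is the constant `w`,
so it is integrable a little further, contradicting maximality. -/
theorem integrableOn_wealth_drift (hC : ∀ T, IntegrableOn C (Icc 0 T))
    (hW : ∀ t, 0 ≤ t → W t = w + ∫ u in (0:ℝ)..t, (r * W u - C u)) (T : ℝ) :
    IntegrableOn (fun u ↦ r * W u - C u) (Icc 0 T) := by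
  set f : ℝ → ℝ := fun u ↦ r * W u - C u
  set B : Set ℝ := {T | IntegrableOn f (Icc 0 T)}
  set WE : ℝ → ℝ := fun t ↦ exp (r * t) * (w - ∫ u in (0:ℝ)..t, exp (-r * u) * C u)
  have hWE : ∀ t, 0 ≤ t → t ∈ B → W t = WE t := by
    intro t ht htB
    change W t = exp (r * t) * (w - ∫ u in (0:ℝ)..t, exp (-r * u) * C u)
    rw [← exp_neg_mul_mul_wealth_eq hW ht htB, ← mul_assoc, ← exp_add]
    simp
  have hWE_cont : ∀ t, 0 ≤ t → ContinuousOn WE (Icc 0 t) := by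
    intro t ht
    have hprim : ContinuousOn (fun x ↦ ∫ u in (0:ℝ)..x, exp (-r * u) * C u) (uIcc 0 t) :=
      intervalIntegral.continuousOn_primitive_interval
        (uIcc_of_le ht ▸ (hC t).continuousOn_mul (by fun_prop) isCompact_Icc)
    rw [uIcc_of_le ht] at hprim
    exact (continuous_exp.comp (continuous_const_mul r)).continuousOn.mul
      (continuousOn_const.sub hprim)
  have hjunk : ∀ t, 0 ≤ t → t ∉ B → W t = w := by
    intro t ht htB
    rw [hW t ht, intervalIntegral.integral_undef, add_zero]
    rwa [intervalIntegrable_iff_integrableOn_Icc_of_le ht]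
  have hdown : ∀ s t, s ≤ t → t ∈ B → s ∈ B := fun s t hst ht ↦
    IntegrableOn.mono_set ht (Icc_subset_Icc_right hst)
  have h0 : (0:ℝ) ∈ B := by simp [B, f]
  by_contra hT
  have hbdd : BddAbove B := ⟨T, fun t ht ↦ le_of_not_gt fun h ↦ hT (hdown T t h.le ht)⟩
  set τ := sSup B
  have hτ₀ : 0 ≤ τ := le_csSup hbdd h0
  have hτ : τ ∈ B := by
    have hint : IntegrableOn (fun u ↦ r * WE u - C u) (Icc 0 τ) :=
      ((continuousOn_const.mul (hWE_cont τ hτ₀)).integrableOn_Icc).sub (hC τ)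
    refine (integrableOn_Icc_iff_integrableOn_Ico).2 ((hint.mono_set Ico_subset_Icc_self).congr_fun
      (fun u hu ↦ ?_) measurableSet_Ico)
    obtain ⟨s, hsB, hus⟩ := exists_lt_of_lt_csSup ⟨0, h0⟩ hu.2
    simp only [f, hWE u hu.1 (hdown u s hus.le hsB)]
  have hτ₁ : τ + 1 ∈ B := by
    have hint : IntegrableOn (fun u ↦ r * w - C u) (Ioc τ (τ + 1)) :=
      (integrableOn_const measure_Ioc_lt_top.ne).sub
        ((hC (τ + 1)).mono_set (Ioc_subset_Icc_self.trans (Icc_subset_Icc_left hτ₀)))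
    have hright : IntegrableOn f (Ioc τ (τ + 1)) := hint.congr_fun (fun u hu ↦ by
      simp only [f, hjunk u (hτ₀.trans hu.1.le) (notMem_of_csSup_lt hu.1 hbdd)])
      measurableSet_Ioc
    have h := hτ.union hright
    rwa [Icc_union_Ioc_eq_Icc hτ₀ (by linarith)] at h
  linarith [le_csSup hbdd hτ₁]

end Wealth

/-- The consumption-habit process `Z(t) = e^{-ρt}(z + ∫_0^t ρ e^{ρu} C(u) du)`. -/
noncomputable def habit (ρ z : ℝ) (C : ℝ → ℝ) (t : ℝ) : ℝ :=
  Real.exp (-(ρ * t)) * (z + ∫ u in (0:ℝ)..t, ρ * Real.exp (ρ * u) * C u)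

section Habit

variable {ρ α z : ℝ} {C : ℝ → ℝ}

theorem monotoneOn_exp_mul_habit (hρ : 0 ≤ ρ) (hC : ∀ T, IntegrableOn C (Icc 0 T))
    (hhabit : ∀ t, 0 ≤ t → α * habit ρ z C t ≤ C t) :
    MonotoneOn (fun t ↦ exp (ρ * (1 - α) * t) * habit ρ z C t) (Ici 0) := by
  set g : ℝ → ℝ := fun u ↦ ρ * exp (ρ * u) * C u
  set Y : ℝ → ℝ := fun t ↦ z + ∫ u in (0:ℝ)..t, g u
  have hg : ∀ a b, 0 ≤ a → a ≤ b → IntervalIntegrable g volume a b := fun a b ha hab ↦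
    intervalIntegrable_mul_of_integrableOn_Icc (g := fun u ↦ ρ * exp (ρ * u)) (by fun_prop)
      (hC b) ha hab
  have hY : ∀ t, exp (ρ * t) * habit ρ z C t = Y t := fun t ↦ by
    rw [habit, ← mul_assoc, ← exp_add, add_neg_cancel, exp_zero, one_mul]
  have hexp : ∀ t, exp (ρ * (1 - α) * t) = exp (-(ρ * α) * t) * exp (ρ * t) := fun t ↦ by
    rw [← exp_add]; ring_nf
  intro s (hs : 0 ≤ s) t _ hst
  dsimp only
  rw [hexp t, hexp s, mul_assoc, mul_assoc, hY, hY, ← sub_nonneg,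
    exp_mul_mul_sub_eq_integral (-(ρ * α)) (hg s t hs hst) (fun u hu ↦ ?_)]
  · refine intervalIntegral.integral_nonneg hst fun u hu ↦ ?_
    have hu₀ : 0 ≤ u := hs.trans hu.1
    have hgY : ρ * α * Y u ≤ g u := by
      have hCu := mul_le_mul_of_nonneg_left (hhabit u hu₀) (by positivity : 0 ≤ ρ * exp (ρ * u))
      simp only [← hY, g]
      linarith
    have hE := exp_pos (-(ρ * α) * u)
    nlinarith
  · rw [uIcc_of_le hst] at hu
    simp only [Y]
    rw [← intervalIntegral.integral_add_adjacent_intervals (hg 0 s le_rfl hs) (hg s u hs hu.1),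
      add_assoc]

theorem habit_pos {t : ℝ} (hρ : 0 ≤ ρ) (hC : ∀ T, IntegrableOn C (Icc 0 T))
    (hhabit : ∀ t, 0 ≤ t → α * habit ρ z C t ≤ C t) (hz : 0 < z) (ht : 0 ≤ t) :
    0 < habit ρ z C t := by
  have h := monotoneOn_exp_mul_habit hρ hC hhabit (self_mem_Ici : (0:ℝ) ∈ Ici 0) ht ht
  simp only [mul_zero, exp_zero, habit, neg_zero, intervalIntegral.integral_same, add_zero,
    one_mul] at h
  exact pos_of_mul_pos_right (hz.trans_le h) (exp_pos _).le

end Habit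

theorem exp_neg_mul_mul_wealth_le {r ρ α z w t₀ t : ℝ} {C W : ℝ → ℝ} (hρ : 0 ≤ ρ) (hα : 0 ≤ α)
    (hk : r + ρ * (1 - α) ≠ 0) (hC : ∀ T, IntegrableOn C (Icc 0 T))
    (hhabit : ∀ t, 0 ≤ t → α * habit ρ z C t ≤ C t)
    (hW : ∀ t, 0 ≤ t → W t = w + ∫ u in (0:ℝ)..t, (r * W u - C u))
    (ht₀ : 0 ≤ t₀) (ht : t₀ ≤ t) :
    exp (-r * t) * W t ≤ exp (-r * t₀) * W t₀ - α / (r + ρ * (1 - α)) *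
      (exp (ρ * (1 - α) * t₀) * habit ρ z C t₀) *
        (exp (-(r + ρ * (1 - α)) * t₀) - exp (-(r + ρ * (1 - α)) * t)) := by
  set k := r + ρ * (1 - α)
  set M := exp (ρ * (1 - α) * t₀) * habit ρ z C t₀
  have hCint : ∀ a b, 0 ≤ a → a ≤ b →
      IntervalIntegrable (fun u ↦ exp (-r * u) * C u) volume a b := fun a b ha hab ↦
    intervalIntegrable_mul_of_integrableOn_Icc (by fun_prop) (hC b) ha hab
  have hdiff : exp (-r * t) * W t - exp (-r * t₀) * W t₀ =
      -∫ u in t₀..t, exp (-r * u) * C u := by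
    rw [exp_neg_mul_mul_wealth_eq hW (ht₀.trans ht) (integrableOn_wealth_drift hC hW t),
      exp_neg_mul_mul_wealth_eq hW ht₀ (integrableOn_wealth_drift hC hW t₀),
      ← intervalIntegral.integral_interval_sub_left (hCint 0 t le_rfl (ht₀.trans ht))
        (hCint 0 t₀ le_rfl ht₀)]
    ring
  have hexp : ∫ u in t₀..t, exp (-k * u) = (exp (-k * t₀) - exp (-k * t)) / k := by
    rw [intervalIntegral.integral_comp_mul_left (fun x ↦ exp x) (neg_ne_zero.2 hk), integral_exp,
      smul_eq_mul, inv_neg, div_eq_inv_mul]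
    ring
  have hlower : ∫ u in t₀..t, α * M * exp (-k * u) ≤ ∫ u in t₀..t, exp (-r * u) * C u := by
    refine intervalIntegral.integral_mono_on ht (Continuous.intervalIntegrable (by fun_prop) _ _)
      (hCint t₀ t ht₀ ht) fun u hu ↦ ?_
    have hu₀ : 0 ≤ u := ht₀.trans hu.1
    have hM : M ≤ exp (ρ * (1 - α) * u) * habit ρ z C u :=
      monotoneOn_exp_mul_habit hρ hC hhabit ht₀ hu₀ hu.1
    have hsplit : exp (-r * u) = exp (-k * u) * exp (ρ * (1 - α) * u) := by
      rw [← exp_add]; simp only [k]; ring_nf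
    calc α * M * exp (-k * u)
        ≤ α * (exp (ρ * (1 - α) * u) * habit ρ z C u) * exp (-k * u) := by gcongr
      _ = exp (-r * u) * (α * habit ρ z C u) := by rw [hsplit]; ring
      _ ≤ exp (-r * u) * C u := by gcongr; exact hhabit u hu₀
  rw [intervalIntegral.integral_const_mul, hexp] at hlower
  have hcoef : α / k * M * (exp (-k * t₀) - exp (-k * t)) =
      α * M * ((exp (-k * t₀) - exp (-k * t)) / k) := by
    ring
  linarith

theorem exists_wealth_neg {r ρ α z w t₀ : ℝ} {C W : ℝ → ℝ} (hρ : 0 ≤ ρ) (hα : 0 ≤ α)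
    (hk : 0 < r + ρ * (1 - α)) (hC : ∀ T, IntegrableOn C (Icc 0 T))
    (hhabit : ∀ t, 0 ≤ t → α * habit ρ z C t ≤ C t)
    (hW : ∀ t, 0 ≤ t → W t = w + ∫ u in (0:ℝ)..t, (r * W u - C u))
    (ht₀ : 0 ≤ t₀) (hlt : W t₀ < α / (r + ρ * (1 - α)) * habit ρ z C t₀) :
    ∃ t, t₀ ≤ t ∧ W t < 0 := by
  set k := r + ρ * (1 - α)
  have hshift : exp (ρ * (1 - α) * t₀) * exp (-k * t₀) = exp (-r * t₀) := by
    rw [← exp_add]; simp only [k]; ring_nf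
  have hlim : Tendsto (fun t ↦ exp (-r * t₀) * W t₀ - α / k *
      (exp (ρ * (1 - α) * t₀) * habit ρ z C t₀) * (exp (-k * t₀) - exp (-k * t))) atTop
      (𝓝 (exp (-r * t₀) * (W t₀ - α / k * habit ρ z C t₀))) := by
    have hdecay : Tendsto (fun t ↦ exp (-k * t)) atTop (𝓝 0) :=
      tendsto_exp_atBot.comp (tendsto_id.const_mul_atTop_of_neg (neg_neg_of_pos hk))
    convert tendsto_const_nhds.sub (tendsto_const_nhds.mul (tendsto_const_nhds.sub hdecay)) using 2
    rw [sub_zero, ← hshift]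
    ring
  have hneg : exp (-r * t₀) * (W t₀ - α / k * habit ρ z C t₀) < 0 :=
    mul_neg_of_pos_of_neg (exp_pos _) (by linarith)
  obtain ⟨t, hbound, ht⟩ :=
    ((hlim.eventually (gt_mem_nhds hneg)).and (eventually_ge_atTop t₀)).exists
  have hle := exp_neg_mul_mul_wealth_le hρ hα hk.ne' hC hhabit hW ht₀ ht
  exact ⟨t, ht, neg_of_mul_neg_right (hle.trans_lt hbound) (exp_pos _).le⟩

theorem no_ruin_iff_general (r ρ α z w : ℝ)
    (hr : 0 < r) (hρ : 0 < ρ) (hα : α ∈ Set.Ioc (0:ℝ) 1) (hz : 0 < z)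
    (C W : ℝ → ℝ)
    (hCloc : ∀ T, 0 < T → MeasureTheory.IntegrableOn C (Set.Icc 0 T))
    (hhabit : ∀ t, 0 ≤ t → α * habit ρ z C t ≤ C t)
    (hW : ∀ t, 0 ≤ t → W t = w + ∫ u in (0:ℝ)..t, (r * W u - C u)) :
    (∀ t, 0 ≤ t → 0 < W t) ↔
      (∀ t, 0 ≤ t → α / (r + ρ * (1 - α)) * habit ρ z C t ≤ W t) := by
  obtain ⟨hα₀, hα₁⟩ := hα
  have hC : ∀ T, IntegrableOn C (Icc 0 T) := fun T ↦
    (hCloc (max T 1) (by positivity)).mono_set (Icc_subset_Icc_right (le_max_left T 1))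
  have hk : 0 < r + ρ * (1 - α) := by nlinarith
  constructor
  · intro hpos
    by_contra! ⟨t₀, ht₀, hlt⟩
    obtain ⟨t, ht, hWt⟩ := exists_wealth_neg hρ.le hα₀.le hk hC hhabit hW ht₀ hlt
    exact (hpos t (ht₀.trans ht)).not_gt hWt
  · intro hsafe t ht
    exact (mul_pos (div_pos hα₀ hk) (habit_pos hρ.le hC hhabit hz ht)).trans_le (hsafe t ht)

/-- Lemma 2.1, no-ruin condition: wealth stays positive iff the
wealth-to-habit ratio stays at or above the safe level `x̲ = α/(r + ρ(1-α))`. -/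
theorem no_ruin_iff (r ρ α z w : ℝ)
    (hr : 0 < r) (hρ : 0 < ρ) (hα : α ∈ Set.Ioc (0:ℝ) 1) (hz : 0 < z)
    (C W : ℝ → ℝ)
    (hCmeas : Measurable C)
    (hCnonneg : ∀ t, 0 ≤ t → 0 ≤ C t)
    (hCloc : ∀ T, 0 < T → MeasureTheory.IntegrableOn C (Set.Icc 0 T))
    (hhabit : ∀ t, 0 ≤ t → α * habit ρ z C t ≤ C t)
    (hW : ∀ t, 0 ≤ t → W t = w + ∫ u in (0:ℝ)..t, (r * W u - C u)) :
    (∀ t, 0 ≤ t → 0 < W t) ↔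
      (∀ t, 0 ≤ t → α / (r + ρ * (1 - α)) * habit ρ z C t ≤ W t) :=
  no_ruin_iff_general r ρ α z w hr hρ hα hz C W hCloc hhabit hW
end

section
/- Assume r>0, ρ>0, α∈(0,1], γ>0 with γ≠1, and δ ≥ r+ρ(1−α). Set y_α := α^{−γ}/(1+ρx̲). Let y:(0,α^{−γ}] → (0, y_α] be a strictly increasing solution of the dual ODE with y(α^{−γ}) = y_α and 0 < y(ψ) < (δ/(r+ρ))ψ for 0<ψ<α^{−γ}, and let ψ denote its inverse function on (0,y_α]. Define u(y) := (1/δ)[(γ/(1−γ))ψ(y)^{1−1/γ} + ((r+ρ−δ)/ρ)(ψ(y)−y)] for 0<y≤y_α. Then u is strictly decreasing and strictly convex on (0,y_α], its derivative satisfies u'(y) = 1/ρ − ψ(y)/(ρy), u satisfies (r+ρ−δ)·y·u'(y) + δ·u(y) = (γ/(1−γ))(y − ρ y u'(y))^{1−1/γ} for 0<y<y_α, and u'(y_α) = −x̲, equivalently y_α − ρ y_α u'(y_α) = α^{−γ}. -/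
open Set Filter Topology

/-!
Along the dual ODE, `y(s)/s` increases exactly when `y` lies above the curve
`b(s) = s - ρ/(r+ρ) s^{1-1/γ}`. At the terminal point `y(α^{-γ}) = b(α^{-γ})`, and `y` cannot cross
`b` when followed backwards in `s`, since `y' < b'` wherever `y ≤ b`; hence `y > b` on the whole
open interval and `y(s)/s` is strictly increasing. By the chain rule through `ψ = y⁻¹` and the ODE,
`u'(v) = 1/ρ - ψ(v)/(ρv)`, which is therefore strictly increasing: `u` is strictly convex, and
`u' < u'(y_α) = -x̲ < 0` makes it strictly decreasing.
-/

theorem pos_of_hasDerivWithinAt_neg_of_nonpos {F : ℝ → ℝ} {a b : ℝ} (hab : a < b)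
    (hF : ContinuousOn F (Icc a b)) (hb : 0 ≤ F b)
    (hF' : ∀ x ∈ Ico a b, F x ≤ 0 → ∃ d < 0, HasDerivWithinAt F d (Ici x) x) : 0 < F a := by
  by_contra! ha
  -- since `F a ≤ 0 ≤ F b`, some minimum point of `F` on `[a, b]` lies in `[a, b)`
  obtain ⟨t, ht, hmin⟩ : ∃ t ∈ Ico a b, IsMinOn F (Icc a b) t := by
    obtain ⟨t, ht, hmin⟩ := isCompact_Icc.exists_isMinOn (nonempty_Icc.2 hab.le) hF
    rcases ht.2.lt_or_eq with htb | rfl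
    · exact ⟨t, ⟨ht.1, htb⟩, hmin⟩
    · exact ⟨a, left_mem_Ico.2 hab, fun x hx => ha.trans (hb.trans (hmin hx))⟩
  obtain ⟨d, hd, hFd⟩ := hF' t ht ((hmin (left_mem_Icc.2 hab.le)).trans ha)
  have hloc : IsLocalMinOn F (Icc t b) t := (hmin.on_subset (Icc_subset_Icc_left ht.1)).localize
  have hslope := hloc.hasFDerivWithinAt_nonneg (hFd.mono Icc_subset_Ici_self).hasFDerivWithinAt
    (sub_mem_posTangentConeAt_of_segment_subset (segment_eq_Icc ht.2.le).subset)
  rw [ContinuousLinearMap.toSpanSingleton_apply, smul_eq_mul] at hslope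
  nlinarith [sub_pos.2 ht.2]

theorem StrictMonoOn.strictMonoOn_of_leftInvOn {α β : Type*} [LinearOrder α] [Preorder β]
    {f : α → β} {g : β → α} {s : Set α} {t : Set β} (hf : StrictMonoOn f s) (hg : MapsTo g t s)
    (hfg : LeftInvOn f g t) : StrictMonoOn g t := by
  intro v hv w hw hvw
  by_contra! hle
  have := hf.le_iff_le (hg hw) (hg hv) |>.2 hle
  rw [hfg hv, hfg hw] at this
  exact absurd this (not_le_of_gt hvw)

theorem StrictMonoOn.continuousOn_Ioc_of_image_eq {g : ℝ → ℝ} {a b a' b' : ℝ}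
    (hg : StrictMonoOn g (Ioc a b)) (himg : g '' Ioc a b = Ioc a' b') :
    ContinuousOn g (Ioc a b) := by
  intro v hv
  have hgv : g v ∈ Ioc a' b' := himg ▸ mem_image_of_mem g hv
  rcases hv.2.lt_or_eq with hvb | rfl
  · have hgb : g b ∈ Ioc a' b' := himg ▸ mem_image_of_mem g ⟨hv.1.trans hvb, le_rfl⟩
    refine (hg.continuousAt_of_image_mem_nhds (Ioc_mem_nhds hv.1 hvb) ?_).continuousWithinAt
    rw [himg]
    exact Ioc_mem_nhds hgv.1 ((hg hv ⟨hv.1.trans hvb, le_rfl⟩ hvb).trans_le hgb.2)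
  · refine (hg.continuousWithinAt_left_of_image_mem_nhdsWithin (Ioc_mem_nhdsLE hv.1) ?_).mono
      Ioc_subset_Iic_self
    rw [himg]
    exact Ioc_mem_nhdsLE_of_mem hgv

theorem strictAntiOn_div_of_leftInvOn {y ψ : ℝ → ℝ} {A B : ℝ}
    (hy : StrictMonoOn (fun s => y s / s) (Ioc 0 A)) (hψ : StrictMonoOn ψ (Ioc 0 B))
    (hmaps : MapsTo ψ (Ioc 0 B) (Ioc 0 A)) (hinv : LeftInvOn y ψ (Ioc 0 B)) :
    StrictAntiOn (fun v => ψ v / v) (Ioc 0 B) := by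
  intro v hv w hw hvw
  have h := hy (hmaps hv) (hmaps hw) (hψ hv hw hvw)
  simp only [hinv hv, hinv hw] at h
  simpa only [inv_div] using
    (inv_lt_inv₀ (div_pos hw.1 (hmaps hw).1) (div_pos hv.1 (hmaps hv).1)).2 h

theorem hasDerivWithinAt_Ioc_of_hasDerivAt {f f' : ℝ → ℝ} {a b : ℝ}
    (hf : ContinuousOn f (Ioc a b)) (hf' : ∀ x ∈ Ioo a b, HasDerivAt f (f' x) x)
    (hf'c : ContinuousOn f' (Ioc a b)) {x : ℝ} (hx : x ∈ Ioc a b) :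
    HasDerivWithinAt f (f' x) (Ioc a b) x := by
  rcases hx.2.lt_or_eq with hxb | rfl
  · exact (hf' x ⟨hx.1, hxb⟩).hasDerivWithinAt
  have hIoo : Ioo a x ∈ 𝓝[<] x := Ioo_mem_nhdsLT hx.1
  refine (hasDerivWithinAt_Iic_of_tendsto_deriv
    (fun z hz => (hf' z hz).differentiableAt.differentiableWithinAt)
    ((hf x hx).mono Ioo_subset_Ioc_self) hIoo ?_).mono Ioc_subset_Iic_self
  refine ((hf'c x hx).tendsto.mono_left
    (nhdsWithin_le_of_mem (mem_of_superset hIoo Ioo_subset_Ioc_self))).congr' ?_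
  filter_upwards [hIoo] with z hz using ((hf' z hz).deriv).symm

theorem StrictMonoOn.strictConvexOn_of_hasDerivAt {D : Set ℝ} (hD : Convex ℝ D) {f f' : ℝ → ℝ}
    (hf : ContinuousOn f D) (hf' : ∀ x ∈ interior D, HasDerivAt f (f' x) x)
    (hmono : StrictMonoOn f' (interior D)) : StrictConvexOn ℝ D f :=
  (hmono.congr fun x hx => (hf' x hx).deriv.symm).strictConvexOn_of_deriv hD hf

theorem strictAntiOn_Ioc_of_hasDerivAt {f f' : ℝ → ℝ} {a b : ℝ} (hf : ContinuousOn f (Ioc a b))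
    (hf' : ∀ x ∈ Ioo a b, HasDerivAt f (f' x) x) (hmono : StrictMonoOn f' (Ioc a b))
    (hb : f' b ≤ 0) : StrictAntiOn f (Ioc a b) := by
  refine strictAntiOn_of_deriv_neg (convex_Ioc a b) hf fun x hx => ?_
  rw [interior_Ioc] at hx
  rw [(hf' x hx).deriv]
  exact (hmono ⟨hx.1, hx.2.le⟩ ⟨hx.1.trans hx.2, le_rfl⟩ hx.2).trans_le hb

theorem rpow_neg_rpow_neg_one_div {α γ : ℝ} (hα : 0 ≤ α) (hγ : γ ≠ 0) :
    (α ^ (-γ)) ^ (-(1 / γ)) = α := by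
  rw [← Real.rpow_mul hα, show -γ * -(1 / γ) = 1 by field_simp, Real.rpow_one]

theorem lt_rpow_neg_one_div {α γ s : ℝ} (hα : 0 < α) (hγ : 0 < γ) (hs : s ∈ Ioo 0 (α ^ (-γ))) :
    α < s ^ (-(1 / γ)) := by
  simpa only [rpow_neg_rpow_neg_one_div hα.le hγ.ne'] using
    Real.rpow_lt_rpow_of_neg hs.1 hs.2 (neg_lt_zero.2 (one_div_pos.2 hγ))

section DualODE

variable {r ρ δ γ : ℝ}

noncomputable def dualRhs (r ρ δ γ s w : ℝ) : ℝ :=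
  ρ / (r + ρ) * ((r + ρ - δ) / ρ - s ^ (-(1 / γ))) * w / (w - δ / (r + ρ) * s)

/-- The nullcline of `s ↦ y s / s` for solutions `y` of the dual ODE, see `dualRhs_mul_sub`. -/
noncomputable def dualBarrier (r ρ γ s : ℝ) : ℝ := s - ρ / (r + ρ) * s ^ (1 - 1 / γ)

theorem dualBarrier_eq {s : ℝ} (hs : 0 < s) :
    dualBarrier r ρ γ s = s * (1 - ρ / (r + ρ) * s ^ (-(1 / γ))) := by
  rw [dualBarrier, show 1 - 1 / γ = -(1 / γ) + 1 by ring, Real.rpow_add_one hs.ne']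
  ring

theorem hasDerivAt_dualBarrier {s : ℝ} (hs : 0 < s) :
    HasDerivAt (dualBarrier r ρ γ) (1 - ρ / (r + ρ) * ((1 - 1 / γ) * s ^ (-(1 / γ)))) s := by
  have h := (hasDerivAt_id' s).sub
    ((Real.hasDerivAt_rpow_const (p := 1 - 1 / γ) (Or.inl hs.ne')).const_mul (ρ / (r + ρ)))
  rwa [show 1 - 1 / γ - 1 = -(1 / γ) by ring] at h

theorem dualRhs_mul_sub {s w : ℝ} (hρ : ρ ≠ 0) (hrρ : r + ρ ≠ 0) (hs : 0 < s)
    (hden : w - δ / (r + ρ) * s ≠ 0) :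
    dualRhs r ρ δ γ s w * s - w = w * (dualBarrier r ρ γ s - w) / (w - δ / (r + ρ) * s) := by
  rw [dualBarrier_eq hs, dualRhs, div_mul_eq_mul_div, div_sub' hden]
  congr 1
  field_simp
  ring

theorem dualRhs_lt_deriv_dualBarrier (hρ : 0 < ρ) (hrρ : 0 < r + ρ) (hγ : 0 < γ) {s w : ℝ}
    (hs : 0 < s) (hw : 0 < w) (hwδ : w < δ / (r + ρ) * s) (hwb : w ≤ dualBarrier r ρ γ s) :
    dualRhs r ρ δ γ s w < 1 - ρ / (r + ρ) * ((1 - 1 / γ) * s ^ (-(1 / γ))) := by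
  have hsub : dualRhs r ρ δ γ s w * s - w ≤ 0 := by
    rw [dualRhs_mul_sub hρ.ne' hrρ.ne' hs (by linarith)]
    exact div_nonpos_of_nonneg_of_nonpos (mul_nonneg hw.le (by linarith)) (by linarith)
  rw [dualBarrier_eq hs] at hwb
  have hle : dualRhs r ρ δ γ s w ≤ 1 - ρ / (r + ρ) * s ^ (-(1 / γ)) :=
    le_of_mul_le_mul_right (by linarith) hs
  have : 0 < ρ / (r + ρ) * s ^ (-(1 / γ)) / γ := by positivity
  linarith [show ρ / (r + ρ) * ((1 - 1 / γ) * s ^ (-(1 / γ)))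
    = ρ / (r + ρ) * s ^ (-(1 / γ)) - ρ / (r + ρ) * s ^ (-(1 / γ)) / γ by ring]

theorem lt_dualRhs_mul_of_dualBarrier_lt (hρ : ρ ≠ 0) (hrρ : r + ρ ≠ 0) {s w : ℝ} (hs : 0 < s)
    (hw : 0 < w) (hwδ : w < δ / (r + ρ) * s) (hbw : dualBarrier r ρ γ s < w) :
    w < dualRhs r ρ δ γ s w * s := by
  have := dualRhs_mul_sub (γ := γ) hρ hrρ hs (sub_neg.2 hwδ).ne
  have : 0 < w * (dualBarrier r ρ γ s - w) / (w - δ / (r + ρ) * s) :=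
    div_pos_of_neg_of_neg (mul_neg_of_pos_of_neg hw (by linarith)) (by linarith)
  linarith

theorem dualRhs_pos (hρ : 0 < ρ) (hrρ : 0 < r + ρ) {s w : ℝ}
    (hq : (r + ρ - δ) / ρ < s ^ (-(1 / γ))) (hw : 0 < w) (hwδ : w < δ / (r + ρ) * s) :
    0 < dualRhs r ρ δ γ s w :=
  div_pos_of_neg_of_neg (mul_neg_of_neg_of_pos
    (mul_neg_of_pos_of_neg (by positivity) (sub_neg.2 hq)) hw) (sub_neg.2 hwδ)

theorem dualBarrier_lt_of_hasDerivAt (hρ : 0 < ρ) (hrρ : 0 < r + ρ) (hγ : 0 < γ) {y : ℝ → ℝ}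
    {A : ℝ} (hy_cont : ContinuousOn y (Ioc 0 A))
    (hy_ode : ∀ s ∈ Ioo 0 A, HasDerivAt y (dualRhs r ρ δ γ s (y s)) s)
    (hy_bound : ∀ s ∈ Ioo 0 A, 0 < y s ∧ y s < δ / (r + ρ) * s)
    (hyA : y A = dualBarrier r ρ γ A) {s : ℝ} (hs : s ∈ Ioo 0 A) :
    dualBarrier r ρ γ s < y s := by
  have hsub : Icc s A ⊆ Ioc 0 A := Icc_subset_Ioc hs.1 le_rfl
  have hbar_cont : ContinuousOn (dualBarrier r ρ γ) (Ioc 0 A) := fun x hx =>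
    (hasDerivAt_dualBarrier hx.1).continuousAt.continuousWithinAt
  refine sub_pos.1 <|
    pos_of_hasDerivWithinAt_neg_of_nonpos (F := fun t => y t - dualBarrier r ρ γ t) hs.2
      ((hy_cont.sub hbar_cont).mono hsub) (by simp [hyA]) fun x hx hFx => ?_
  have hx' : x ∈ Ioo 0 A := ⟨hs.1.trans_le hx.1, hx.2⟩
  obtain ⟨hw, hwδ⟩ := hy_bound x hx'
  exact ⟨_, sub_neg.2 (dualRhs_lt_deriv_dualBarrier hρ hrρ hγ hx'.1 hw hwδ (sub_nonpos.1 hFx)),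
    ((hy_ode x hx').sub (hasDerivAt_dualBarrier hx'.1)).hasDerivWithinAt⟩

theorem strictMonoOn_div_self_of_dualBarrier_lt (hρ : ρ ≠ 0) (hrρ : r + ρ ≠ 0) {y : ℝ → ℝ}
    {A : ℝ} (hy_cont : ContinuousOn y (Ioc 0 A))
    (hy_ode : ∀ s ∈ Ioo 0 A, HasDerivAt y (dualRhs r ρ δ γ s (y s)) s)
    (hy_bound : ∀ s ∈ Ioo 0 A, 0 < y s ∧ y s < δ / (r + ρ) * s)
    (hbarrier : ∀ s ∈ Ioo 0 A, dualBarrier r ρ γ s < y s) :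
    StrictMonoOn (fun s => y s / s) (Ioc 0 A) := by
  refine strictMonoOn_of_deriv_pos (convex_Ioc 0 A)
    (hy_cont.div continuousOn_id fun s hs => hs.1.ne') fun s hs => ?_
  rw [interior_Ioc] at hs
  obtain ⟨hw, hwδ⟩ := hy_bound s hs
  have hd : HasDerivAt (fun s => y s / s) _ s := (hy_ode s hs).div (hasDerivAt_id' s) hs.1.ne'
  rw [hd.deriv, mul_one]
  have := lt_dualRhs_mul_of_dualBarrier_lt hρ hrρ hs.1 hw hwδ (hbarrier s hs)
  exact div_pos (sub_pos.2 this) (pow_pos hs.1 2)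

/-- Since `γ / (1 - γ) * (1 - 1 / γ) = -1`, the ODE collapses the chain-rule derivative
through `ψ = y⁻¹`. -/
theorem hasDerivAt_dualValue (hρ : 0 < ρ) (hrρ : 0 < r + ρ) (hδ : δ ≠ 0) (hγ0 : γ ≠ 0)
    (hγ1 : γ ≠ 1) {y ψ : ℝ → ℝ} {v : ℝ} (hv : 0 < v) (hψv : 0 < ψ v) (hψc : ContinuousAt ψ v)
    (hinv : ∀ᶠ x in 𝓝 v, y (ψ x) = x) (hy : HasDerivAt y (dualRhs r ρ δ γ (ψ v) v) (ψ v))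
    (hq : (r + ρ - δ) / ρ < ψ v ^ (-(1 / γ))) (hvδ : v < δ / (r + ρ) * ψ v) :
    HasDerivAt (fun x => 1 / δ * (γ / (1 - γ) * ψ x ^ (1 - 1 / γ) + (r + ρ - δ) / ρ * (ψ x - x)))
      (1 / ρ - ψ v / (ρ * v)) v := by
  have hψ := hy.of_local_left_inverse hψc (dualRhs_pos hρ hrρ hq hv hvδ).ne' hinv
  have h := (((hψ.rpow_const (p := 1 - 1 / γ) (Or.inl hψv.ne')).const_mul (γ / (1 - γ))).add
    ((hψ.sub (hasDerivAt_id' v)).const_mul ((r + ρ - δ) / ρ))).const_mul (1 / δ)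
  refine h.congr_deriv ?_
  rw [show 1 - 1 / γ - 1 = -(1 / γ) by ring, dualRhs, inv_div]
  have h1γ : 1 - γ ≠ 0 := sub_ne_zero.2 (Ne.symm hγ1)
  have hq' : r + ρ - δ - ρ * ψ v ^ (-(1 / γ)) ≠ 0 := by
    rw [show r + ρ - δ - ρ * ψ v ^ (-(1 / γ)) = ρ * ((r + ρ - δ) / ρ - ψ v ^ (-(1 / γ))) by
      field_simp]
    exact mul_ne_zero hρ.ne' (sub_neg.2 hq).ne
  field_simp
  ring

theorem strictMonoOn_dualMarginal (hρ : 0 < ρ) (hrρ : 0 < r + ρ) (hγ : 0 < γ) {y ψ : ℝ → ℝ}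
    {A B : ℝ} (hy_cont : ContinuousOn y (Ioc 0 A))
    (hy_ode : ∀ s ∈ Ioo 0 A, HasDerivAt y (dualRhs r ρ δ γ s (y s)) s)
    (hy_bound : ∀ s ∈ Ioo 0 A, 0 < y s ∧ y s < δ / (r + ρ) * s)
    (hyA : y A = dualBarrier r ρ γ A) (hψ : StrictMonoOn ψ (Ioc 0 B))
    (hmaps : MapsTo ψ (Ioc 0 B) (Ioc 0 A)) (hinv : LeftInvOn y ψ (Ioc 0 B)) :
    StrictMonoOn (fun v => 1 / ρ - ψ v / (ρ * v)) (Ioc 0 B) := by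
  have hratio := strictMonoOn_div_self_of_dualBarrier_lt hρ.ne' hrρ.ne' hy_cont hy_ode hy_bound
    fun s hs => dualBarrier_lt_of_hasDerivAt hρ hrρ hγ hy_cont hy_ode hy_bound hyA hs
  intro v hv w hw hvw
  have := strictAntiOn_div_of_leftInvOn hratio hψ hmaps hinv hv hw hvw
  simp only [mul_comm ρ, ← div_div]
  linarith [div_lt_div_of_pos_right this hρ]

theorem hasDerivAt_dualValue_of_leftInvOn (hρ : 0 < ρ) (hrρ : 0 < r + ρ) (hδ : δ ≠ 0)
    (hγ0 : γ ≠ 0) (hγ1 : γ ≠ 1) {y ψ : ℝ → ℝ} {A B v : ℝ}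
    (hy_ode : ∀ s ∈ Ioo 0 A, HasDerivAt y (dualRhs r ρ δ γ s (y s)) s)
    (hy_bound : ∀ s ∈ Ioo 0 A, 0 < y s ∧ y s < δ / (r + ρ) * s)
    (hq : ∀ s ∈ Ioo 0 A, (r + ρ - δ) / ρ < s ^ (-(1 / γ)))
    (hψcont : ContinuousOn ψ (Ioc 0 B)) (hinv : LeftInvOn y ψ (Ioc 0 B))
    (hv : v ∈ Ioo 0 B) (hψv : ψ v ∈ Ioo 0 A) :
    HasDerivAt (fun x => 1 / δ * (γ / (1 - γ) * ψ x ^ (1 - 1 / γ) + (r + ρ - δ) / ρ * (ψ x - x)))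
      (1 / ρ - ψ v / (ρ * v)) v := by
  have hyψ : y (ψ v) = v := hinv ⟨hv.1, hv.2.le⟩
  refine hasDerivAt_dualValue hρ hrρ hδ hγ0 hγ1 hv.1 hψv.1
    (hψcont.continuousAt (Ioc_mem_nhds hv.1 hv.2)) ?_ (hyψ ▸ hy_ode _ hψv) (hq _ hψv)
    (by simpa only [hyψ] using (hy_bound _ hψv).2)
  filter_upwards [Ioo_mem_nhds hv.1 hv.2] with x hx using hinv ⟨hx.1, hx.2.le⟩

theorem dualEquation_of_eq_dualValue (hρ : ρ ≠ 0) (hδ : δ ≠ 0) (hγ1 : γ ≠ 1) {v p u : ℝ}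
    (hv : v ≠ 0)
    (hu : u = 1 / δ * (γ / (1 - γ) * p ^ (1 - 1 / γ) + (r + ρ - δ) / ρ * (p - v))) :
    (r + ρ - δ) * v * (1 / ρ - p / (ρ * v)) + δ * u
      = γ / (1 - γ) * (v - ρ * v * (1 / ρ - p / (ρ * v))) ^ (1 - 1 / γ) := by
  have h1γ : 1 - γ ≠ 0 := sub_ne_zero.2 (Ne.symm hγ1)
  rw [hu, show v - ρ * v * (1 / ρ - p / (ρ * v)) = p by field_simp; ring]
  field_simp
  ring

theorem dualBarrier_rpow_neg {α : ℝ} (hα : 0 < α) (hγ : γ ≠ 0) (hD : r + ρ * (1 - α) ≠ 0)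
    (hrρ : r + ρ ≠ 0) :
    dualBarrier r ρ γ (α ^ (-γ)) = α ^ (-γ) / (1 + ρ * (α / (r + ρ * (1 - α)))) := by
  rw [dualBarrier_eq (Real.rpow_pos_of_pos hα _), rpow_neg_rpow_neg_one_div hα.le hγ,
    show 1 + ρ * (α / (r + ρ * (1 - α))) = (r + ρ) / (r + ρ * (1 - α)) by field_simp; ring]
  field_simp
  ring

end DualODE

/-- Proposition 3.1(ii), impatient case: with `y_α = α^{-γ}/(1+ρx̲)`
and `ψ` the inverse of the dual-ODE solution `y`, the function
`u(y) = (1/δ)[(γ/(1-γ))ψ(y)^{1-1/γ} + ((r+ρ-δ)/ρ)(ψ(y)-y)]` is strictly decreasing,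
strictly convex, has derivative `1/ρ - ψ(y)/(ρy)`, solves the dual equation, and
satisfies the free-boundary conditions at `y_α`. -/
theorem u_impatient (r ρ α γ δ yα : ℝ)
    (hr : 0 < r) (hρ : 0 < ρ) (hα : α ∈ Set.Ioc (0:ℝ) 1)
    (hγ : 0 < γ) (hγ1 : γ ≠ 1) (hδ : r + ρ * (1 - α) ≤ δ)
    (hyα : yα = α ^ (-γ) / (1 + ρ * (α / (r + ρ * (1 - α)))))
    (y ψf u : ℝ → ℝ)
    (hy_mono : StrictMonoOn y (Set.Ioc 0 (α ^ (-γ))))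
    (hy_cont : ContinuousOn y (Set.Ioc 0 (α ^ (-γ))))
    (hy_maps : ∀ s ∈ Set.Ioc (0:ℝ) (α ^ (-γ)), y s ∈ Set.Ioc 0 yα)
    (hy_term : y (α ^ (-γ)) = yα)
    (hy_ode : ∀ s ∈ Set.Ioo (0:ℝ) (α ^ (-γ)),
      HasDerivAt y
        ((ρ / (r + ρ) * ((r + ρ - δ) / ρ - s ^ (-(1 / γ))) * y s) /
          (y s - δ / (r + ρ) * s)) s)
    (hy_bound : ∀ s ∈ Set.Ioo (0:ℝ) (α ^ (-γ)), 0 < y s ∧ y s < δ / (r + ρ) * s)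
    (hinv_left : ∀ s ∈ Set.Ioc (0:ℝ) (α ^ (-γ)), ψf (y s) = s)
    (hinv_right : ∀ v ∈ Set.Ioc (0:ℝ) yα,
      ψf v ∈ Set.Ioc 0 (α ^ (-γ)) ∧ y (ψf v) = v)
    (hu : ∀ v ∈ Set.Ioc (0:ℝ) yα,
      u v = (1 / δ) *
        (γ / (1 - γ) * (ψf v) ^ (1 - 1 / γ) + (r + ρ - δ) / ρ * (ψf v - v))) :
    StrictAntiOn u (Set.Ioc 0 yα) ∧
    StrictConvexOn ℝ (Set.Ioc 0 yα) u ∧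
    (∀ v ∈ Set.Ioc (0:ℝ) yα,
      HasDerivWithinAt u (1 / ρ - ψf v / (ρ * v)) (Set.Ioc 0 yα) v) ∧
    (∀ v ∈ Set.Ioo (0:ℝ) yα,
      (r + ρ - δ) * v * (1 / ρ - ψf v / (ρ * v)) + δ * u v
        = γ / (1 - γ) * (v - ρ * v * (1 / ρ - ψf v / (ρ * v))) ^ (1 - 1 / γ)) ∧
    (1 / ρ - ψf yα / (ρ * yα) = -(α / (r + ρ * (1 - α)))) ∧
    (yα - ρ * yα * (1 / ρ - ψf yα / (ρ * yα)) = α ^ (-γ)) := by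
  obtain ⟨hα0, hα1⟩ := hα
  have hrρ : 0 < r + ρ := by linarith
  have hD : 0 < r + ρ * (1 - α) := by nlinarith
  have hA : 0 < α ^ (-γ) := Real.rpow_pos_of_pos hα0 _
  have hyα0 : 0 < yα := hy_term ▸ (hy_maps _ ⟨hA, le_rfl⟩).1
  have hψA : ψf yα = α ^ (-γ) := hy_term ▸ hinv_left _ ⟨hA, le_rfl⟩
  have hψmaps : MapsTo ψf (Ioc 0 yα) (Ioc 0 (α ^ (-γ))) := fun v hv => (hinv_right v hv).1
  have hψinv : LeftInvOn y ψf (Ioc 0 yα) := fun v hv => (hinv_right v hv).2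
  have hψmono := hy_mono.strictMonoOn_of_leftInvOn hψmaps hψinv
  have hψcont := hψmono.continuousOn_Ioc_of_image_eq <|
    hψmaps.image_subset.antisymm fun s hs => ⟨y s, hy_maps s hs, hinv_left s hs⟩
  have hψlt : ∀ v ∈ Ioo 0 yα, ψf v ∈ Ioo 0 (α ^ (-γ)) := fun v hv =>
    ⟨(hψmaps ⟨hv.1, hv.2.le⟩).1, hψA ▸ hψmono ⟨hv.1, hv.2.le⟩ ⟨hyα0, le_rfl⟩ hv.2⟩
  have hg_mono := strictMonoOn_dualMarginal hρ hrρ hγ hy_cont hy_ode hy_bound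
    (hy_term.trans (hyα.trans (dualBarrier_rpow_neg hα0 hγ.ne' hD.ne' hrρ.ne').symm))
    hψmono hψmaps hψinv
  have hq : ∀ s ∈ Ioo 0 (α ^ (-γ)), (r + ρ - δ) / ρ < s ^ (-(1 / γ)) := fun s hs =>
    (div_le_of_le_mul₀ hρ.le hα0.le (by linarith)).trans_lt (lt_rpow_neg_one_div hα0 hγ hs)
  have hu' : ∀ v ∈ Ioo 0 yα, HasDerivAt u (1 / ρ - ψf v / (ρ * v)) v := fun v hv =>
    (hasDerivAt_dualValue_of_leftInvOn hρ hrρ (hD.trans_le hδ).ne' hγ.ne' hγ1 hy_ode hy_bound hq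
      hψcont hψinv hv (hψlt v hv)).congr_of_eventuallyEq <| by
        filter_upwards [Ioo_mem_nhds hv.1 hv.2] with x hx using hu x ⟨hx.1, hx.2.le⟩
  have hucont : ContinuousOn u (Ioc 0 yα) :=
    (continuousOn_const.mul ((continuousOn_const.mul (hψcont.rpow_const fun v hv =>
      Or.inl (hψmaps hv).1.ne')).add
        (continuousOn_const.mul (hψcont.sub continuousOn_id)))).congr hu
  have hg_end : 1 / ρ - ψf yα / (ρ * yα) = -(α / (r + ρ * (1 - α))) := by
    rw [hψA, hyα]; field_simp; ring
  refine ⟨strictAntiOn_Ioc_of_hasDerivAt hucont hu' hg_mono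
      (hg_end.trans_le (neg_nonpos.2 (div_pos hα0 hD).le)),
    StrictMonoOn.strictConvexOn_of_hasDerivAt (convex_Ioc 0 yα) hucont (by rwa [interior_Ioc])
      (by rw [interior_Ioc]; exact hg_mono.mono Ioo_subset_Ioc_self),
    fun v hv => hasDerivWithinAt_Ioc_of_hasDerivAt hucont hu'
      (continuousOn_const.sub (hψcont.div (continuousOn_const.mul continuousOn_id) fun v hv =>
        (mul_pos hρ hv.1).ne')) hv,
    fun v hv => dualEquation_of_eq_dualValue hρ.ne' (hD.trans_le hδ).ne' hγ1 hv.1.ne'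
      (hu v ⟨hv.1, hv.2.le⟩),
    hg_end, by rw [hψA]; field_simp; ring⟩
end

section
/- Assume r>0, ρ>0, α∈(0,1], γ>0 with γ≠1, and δ ≥ r+ρ(1−α). Let y:(0,α^{−γ}]→(0,∞) be continuous, differentiable on (0,α^{−γ}), satisfying the dual ODE at every ψ∈(0,α^{−γ}), with y(α^{−γ}) = α^{−γ}/(1+ρx̲) and 0 < y(ψ) < (δ/(r+ρ))ψ for 0<ψ<α^{−γ}. Then y(ψ) > ψ − (ρ/(r+ρ))ψ^{1−1/γ} for all 0 < ψ < α^{−γ}. -/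
open Topology

lemma exists_lt_right {g : ℝ → ℝ} {x d b : ℝ} (hd : HasDerivAt g d x)
    (hneg : d < 0) (hb : x < b) : ∃ z ∈ Set.Ioo x b, g z < g x := by
  have h := hasDerivAt_iff_tendsto_slope.mp hd
  have h2 : ∀ᶠ z in 𝓝[≠] x, slope g x z < 0 := h.eventually_lt_const hneg
  have hle : 𝓝[>] x ≤ 𝓝[≠] x :=
    nhdsWithin_mono x fun z hz => ne_of_gt hz
  have h3 : ∀ᶠ z in 𝓝[>] x, slope g x z < 0 := hle h2
  have h4 : ∀ᶠ z in 𝓝[>] x, z ∈ Set.Ioo x b :=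
    Ioo_mem_nhdsGT_of_mem ⟨le_refl x, hb⟩
  obtain ⟨z, hz1, hz2⟩ := (h3.and h4).exists
  refine ⟨z, hz2, ?_⟩
  have hzx : 0 < z - x := sub_pos.mpr hz2.1
  have h5 : g z - g x = slope g x z * (z - x) := by
    rw [slope_def_field]; field_simp
  nlinarith [mul_neg_of_neg_of_pos hz1 hzx]

/-- Lemma B.1: in the impatient case `δ ≥ r + ρ(1-α)`, any
solution of the dual ODE with terminal value `α^{-γ}/(1+ρx̲)` satisfying
`0 < y(ψ) < (δ/(r+ρ))ψ` also satisfies the lower bound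
`y(ψ) > ψ - (ρ/(r+ρ))ψ^{1-1/γ}` on `(0, α^{-γ})`. -/
theorem dual_ode_lower_bound (r ρ α γ δ : ℝ)
    (hr : 0 < r) (hρ : 0 < ρ) (hα : α ∈ Set.Ioc (0:ℝ) 1)
    (hγ : 0 < γ) (hγ1 : γ ≠ 1) (hδ : r + ρ * (1 - α) ≤ δ)
    (y : ℝ → ℝ)
    (hy_cont : ContinuousOn y (Set.Ioc 0 (α ^ (-γ))))
    (hy_pos : ∀ ψ ∈ Set.Ioc (0:ℝ) (α ^ (-γ)), 0 < y ψ)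
    (hy_ode : ∀ ψ ∈ Set.Ioo (0:ℝ) (α ^ (-γ)),
      HasDerivAt y
        ((ρ / (r + ρ) * ((r + ρ - δ) / ρ - ψ ^ (-(1 / γ))) * y ψ) /
          (y ψ - δ / (r + ρ) * ψ)) ψ)
    (hy_term : y (α ^ (-γ)) = α ^ (-γ) / (1 + ρ * (α / (r + ρ * (1 - α)))))
    (hy_ub : ∀ ψ ∈ Set.Ioo (0:ℝ) (α ^ (-γ)), y ψ < δ / (r + ρ) * ψ) :
    ∀ ψ ∈ Set.Ioo (0:ℝ) (α ^ (-γ)),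
      ψ - ρ / (r + ρ) * ψ ^ (1 - 1 / γ) < y ψ := by
  obtain ⟨hα0, hα1⟩ := hα
  set ψb : ℝ := α ^ (-γ) with hψb_def
  have hψb_pos : 0 < ψb := Real.rpow_pos_of_pos hα0 _
  have hs : 0 < r + ρ := by linarith
  set g : ℝ → ℝ := fun t => y t - (t - ρ / (r + ρ) * t ^ (1 - 1 / γ)) with hg_def
  -- continuity of g on Ioc 0 ψb
  have hgcont : ContinuousOn g (Set.Ioc 0 ψb) := by
    apply hy_cont.sub
    apply (continuousOn_id).sub
    apply continuousOn_const.mul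
    intro t ht
    exact (Real.continuousAt_rpow_const t _ (Or.inl ht.1.ne')).continuousWithinAt
  -- boundary value
  have hψbpow : ψb ^ (1 - 1 / γ) = α * ψb := by
    rw [hψb_def, ← Real.rpow_mul hα0.le]
    have he : -γ * (1 - 1 / γ) = 1 + -γ := by field_simp; ring
    rw [he, Real.rpow_add hα0, Real.rpow_one]
  have hr1 : 0 < r + ρ * (1 - α) := by nlinarith
  have hbdry : g ψb = 0 := by
    have h2 : 0 < 1 + ρ * (α / (r + ρ * (1 - α))) := by positivity
    rw [hg_def]
    simp only
    rw [hy_term, hψbpow, sub_eq_zero]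
    field_simp
    ring
  -- key derivative estimate
  have key : ∀ x ∈ Set.Ioo (0:ℝ) ψb, y x ≤ x - ρ / (r + ρ) * x ^ (1 - 1 / γ) →
      ∃ d, d < 0 ∧ HasDerivAt g d x := by
    intro x hx hle
    have hx0 : 0 < x := hx.1
    set u : ℝ := x ^ (-(1 / γ)) with hu_def
    have hu_pos : 0 < u := Real.rpow_pos_of_pos hx0 _
    have hαu : α < u := by
      have hxp : 0 < x ^ (1 / γ) := Real.rpow_pos_of_pos hx0 _
      have h1 : x ^ (1 / γ) < ψb ^ (1 / γ) :=
        Real.rpow_lt_rpow hx0.le hx.2 (by positivity)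
      have h2 : ψb ^ (1 / γ) = α⁻¹ := by
        rw [hψb_def, ← Real.rpow_mul hα0.le]
        have he : -γ * (1 / γ) = -1 := by field_simp
        rw [he, Real.rpow_neg_one]
      have h3 : u * x ^ (1 / γ) = 1 := by
        rw [hu_def, ← Real.rpow_add hx0]
        norm_num
      have h4 : x ^ (1 / γ) < α⁻¹ := h2 ▸ h1
      have h5 : α * x ^ (1 / γ) < 1 := by
        calc α * x ^ (1 / γ) < α * α⁻¹ := by
              exact mul_lt_mul_of_pos_left h4 hα0
          _ = 1 := mul_inv_cancel₀ hα0.ne'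
      nlinarith
    have hxpow : x ^ (1 - 1 / γ) = x * u := by
      have he : (1:ℝ) - 1 / γ = 1 + -(1 / γ) := by ring
      rw [hu_def, he, Real.rpow_add hx0, Real.rpow_one]
    -- derivative of the lower bound function
    have hL' : HasDerivAt (fun t : ℝ => t - ρ / (r + ρ) * t ^ (1 - 1 / γ))
        (1 - ρ / (r + ρ) * ((1 - 1 / γ) * u)) x := by
      have h1 : HasDerivAt (fun t : ℝ => t ^ (1 - 1 / γ))
          ((1 - 1 / γ) * x ^ (1 - 1 / γ - 1)) x :=
        Real.hasDerivAt_rpow_const (Or.inl hx0.ne')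
      have h2 : x ^ (1 - 1 / γ - 1) = u := by
        rw [hu_def]; congr 1; ring
      rw [h2] at h1
      exact (hasDerivAt_id x).sub (h1.const_mul _)
    have hyd := hy_ode x hx
    rw [← hu_def] at hyd
    refine ⟨_, ?_, hyd.sub hL'⟩
    -- show the derivative value is negative
    set v : ℝ := y x with hv_def
    have hv0 : 0 < v := hy_pos x ⟨hx0, hx.2.le⟩
    have hvk : v < δ / (r + ρ) * x := hy_ub x hx
    have hle' : v ≤ x - ρ / (r + ρ) * (x * u) := by rwa [hxpow] at hle
    have hδ0 : 0 < δ := by nlinarith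
    have hvk' : v - δ / (r + ρ) * x < 0 := by linarith
    have hstepA : ρ / (r + ρ) * ((r + ρ - δ) / ρ - u) * v / (v - δ / (r + ρ) * x)
        ≤ 1 - ρ * u / (r + ρ) := by
      rw [div_le_iff_of_neg hvk']
      have hident : ρ / (r + ρ) * ((r + ρ - δ) / ρ - u) * v
          - (1 - ρ * u / (r + ρ)) * (v - δ / (r + ρ) * x)
          = δ / (r + ρ) * ((x - ρ / (r + ρ) * (x * u)) - v) := by
        field_simp
        ring
      have hnn : 0 ≤ δ / (r + ρ) * ((x - ρ / (r + ρ) * (x * u)) - v) :=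
        mul_nonneg (by positivity) (by linarith)
      linarith
    have hstepB : (1 - ρ * u / (r + ρ)) - (1 - ρ / (r + ρ) * ((1 - 1 / γ) * u))
        = -(ρ * u / (γ * (r + ρ))) := by
      field_simp
      ring
    have hpos : 0 < ρ * u / (γ * (r + ρ)) := by positivity
    linarith
  -- main argument
  intro ψ hψ
  by_contra hcon
  push_neg at hcon
  have hgψ : g ψ ≤ 0 := by
    rw [hg_def]; simp only; linarith
  -- step 1: find a point strictly below 0
  obtain ⟨d, hdneg, hd⟩ := key ψ hψ hcon
  obtain ⟨ψ', hψ'mem, hψ'lt⟩ := exists_lt_right hd hdneg hψ.2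
  have hψ'pos : 0 < ψ' := lt_trans hψ.1 hψ'mem.1
  have hc : g ψ' < 0 := lt_of_lt_of_le hψ'lt hgψ
  set c : ℝ := g ψ' with hc_def
  -- the set of points where g = c
  set A : Set ℝ := Set.Icc ψ' ψb ∩ g ⁻¹' {c} with hA_def
  have hA_ne : ψ' ∈ A := ⟨⟨le_refl _, hψ'mem.2.le⟩, rfl⟩
  have hA_cont : ContinuousOn g (Set.Icc ψ' ψb) :=
    hgcont.mono (fun t ht => ⟨lt_of_lt_of_le hψ'pos ht.1, ht.2⟩)
  have hA_closed : IsClosed A :=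
    hA_cont.preimage_isClosed_of_isClosed isClosed_Icc isClosed_singleton
  have hA_compact : IsCompact A :=
    isCompact_Icc.of_isClosed_subset hA_closed Set.inter_subset_left
  set ψ₁ : ℝ := sSup A with hψ₁_def
  have hψ₁A : ψ₁ ∈ A := hA_compact.sSup_mem ⟨ψ', hA_ne⟩
  have hψ₁c : g ψ₁ = c := hψ₁A.2
  have hψ₁lt : ψ₁ < ψb := by
    rcases lt_or_eq_of_le hψ₁A.1.2 with h | h
    · exact h
    · exfalso; rw [h] at hψ₁c; rw [hbdry] at hψ₁c; linarith [hψ₁c ▸ hc]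
  have hψ₁pos : 0 < ψ₁ := lt_of_lt_of_le hψ'pos hψ₁A.1.1
  have hA_bdd : BddAbove A := ⟨ψb, fun t ht => ht.1.2⟩
  -- step 3: g > c strictly to the right of ψ₁
  have hright : ∀ t ∈ Set.Ioc ψ₁ ψb, c < g t := by
    intro t ht
    by_contra hnot
    push_neg at hnot
    rcases eq_or_lt_of_le hnot with h | h
    · have htA : t ∈ A := ⟨⟨le_trans hψ₁A.1.1 ht.1.le, ht.2⟩, h⟩
      exact absurd (le_csSup hA_bdd htA) (not_le.mpr ht.1)
    · have hcont' : ContinuousOn g (Set.Icc t ψb) :=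
        hgcont.mono (fun s hs => ⟨lt_of_lt_of_le (lt_trans hψ₁pos ht.1) hs.1, hs.2⟩)
      have hmem : c ∈ Set.Icc (g t) (g ψb) := ⟨h.le, by rw [hbdry]; exact hc.le⟩
      obtain ⟨z, hz1, hz2⟩ := intermediate_value_Icc ht.2 hcont' hmem
      have hzA : z ∈ A := ⟨⟨le_trans hψ₁A.1.1 (le_trans ht.1.le hz1.1), hz1.2⟩, hz2⟩
      have : z ≤ ψ₁ := le_csSup hA_bdd hzA
      linarith [lt_of_lt_of_le ht.1 hz1.1]
  -- step 4: contradiction with derivative at ψ₁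
  have hyψ₁ : y ψ₁ ≤ ψ₁ - ρ / (r + ρ) * ψ₁ ^ (1 - 1 / γ) := by
    have : g ψ₁ < 0 := by rw [hψ₁c]; exact hc
    rw [hg_def] at this; simp only at this; linarith
  obtain ⟨d₁, hd₁neg, hd₁⟩ := key ψ₁ ⟨hψ₁pos, hψ₁lt⟩ hyψ₁
  obtain ⟨z, hzmem, hzlt⟩ := exists_lt_right hd₁ hd₁neg hψ₁lt
  have := hright z ⟨hzmem.1, hzmem.2.le⟩
  rw [hψ₁c] at hzlt
  linarith
end

section
/- Let r>0, ρ>0, α∈(0,1], δ>0, γ>0 with γ≠1, x ≥ x̲, and let x_α ≥ x̲. Let v:[x̲,∞)→ℝ be increasing and assume either (a) γ>1 and α^{1−γ}/(δ(1−γ)) ≤ v(ξ) < 0 for all ξ ≥ x̲, or (b) 0<γ<1, v is continuously differentiable on (x̲,∞), v(x̲) = α^{1−γ}/(δ(1−γ)), and 0 < v'(ξ) < α^{−γ}/(1+ρξ) for all ξ > x_α. Then for every admissible control c ∈ A(x) with state process X, one has lim_{T→∞} e^{−δT}·v(X(T)) = 0. -/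
open Topology

/-- The integral equation for the wealth-to-habit (state) process `X`. -/
def StateEqn (r ρ x : ℝ) (c X : ℝ → ℝ) : Prop :=
  ∀ t : ℝ, 0 ≤ t → X t = x + ∫ u in (0:ℝ)..t, ((r + ρ) * X u - (1 + ρ * X u) * c u)

/-- Membership in the admissible class `A(x)` of consumption-to-habit policies,
together with its state process `X`. -/
def Admissible (r ρ α xlow x : ℝ) (c X : ℝ → ℝ) : Prop :=
  Measurable c ∧ (∀ t, 0 ≤ t → α ≤ c t) ∧
  (∀ T, 0 < T → MeasureTheory.IntegrableOn c (Set.Icc 0 T)) ∧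
  StateEqn r ρ x c X ∧ (∀ t, 0 ≤ t → xlow ≤ X t)

/-!
Along an admissible path the state stays above the safe level `x̲`, so `v (X T) ≥ v x̲`;
and since consumption only drains wealth, Grönwall's inequality gives
`X T ≤ x e^{(r+ρ)T}`. In case (a) `v` is bounded above by `0`. In case (b) the bound
`v' < α^{-γ} / (1 + ρξ)` makes `v ξ` grow at most like `α^{-γ} / ρ · log (1 + ρξ)`, so `v (X T)`
grows at most linearly in `T`. Either way `e^{-δT} v (X T)` is squeezed between two functions
tending to `0`.
-/

open Real Set Filter MeasureTheory

theorem le_mul_exp_of_le_add_integral {f : ℝ → ℝ} {a k T : ℝ} (hk : 0 ≤ k) (hT : 0 ≤ T)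
    (hf : ContinuousOn f (Icc 0 T))
    (h : ∀ t ∈ Icc 0 T, f t ≤ a + k * ∫ s in (0:ℝ)..t, f s) :
    f T ≤ a * exp (k * T) := by
  set u : ℝ → ℝ := fun t => a + k * ∫ s in (0:ℝ)..t, f s
  have hu_cont : ContinuousOn u (Icc 0 T) := by
    have := intervalIntegral.continuousOn_primitive_interval (μ := volume)
      (uIcc_of_le hT ▸ hf.integrableOn_Icc)
    rw [uIcc_of_le hT] at this
    exact continuousOn_const.add (continuousOn_const.mul this)
  have hu_deriv : ∀ t ∈ Ioo 0 T, HasDerivAt u (k * f t) t := fun t ht =>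
    ((intervalIntegral.integral_hasDerivAt_right
      (ContinuousOn.intervalIntegrable_of_Icc ht.1.le (hf.mono (Icc_subset_Icc le_rfl ht.2.le))))
      (hf.mono Ioo_subset_Icc_self |>.stronglyMeasurableAtFilter isOpen_Ioo t ht)
      (hf.continuousAt (Icc_mem_nhds ht.1 ht.2))).const_mul k |>.const_add a
  have hψ_deriv : ∀ t ∈ Ioo 0 T, HasDerivAt (fun t => exp (-(k * t)) * u t)
      (k * exp (-(k * t)) * (f t - u t)) t := fun t ht =>
    ((((hasDerivAt_id t).const_mul k).neg.exp).mul (hu_deriv t ht)).congr_deriv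
      (by simp only [Pi.neg_apply, id]; ring)
  have hψ_anti : AntitoneOn (fun t => exp (-(k * t)) * u t) (Icc 0 T) := by
    refine antitoneOn_of_deriv_nonpos (convex_Icc 0 T)
      ((by fun_prop : Continuous fun t => exp (-(k * t))).continuousOn.mul hu_cont)
      (fun t ht => ?_) (fun t ht => ?_) <;> rw [interior_Icc] at ht
    · exact (hψ_deriv t ht).differentiableAt.differentiableWithinAt
    · rw [(hψ_deriv t ht).deriv]
      have := h t (Ioo_subset_Icc_self ht)
      exact mul_nonpos_of_nonneg_of_nonpos (by positivity) (by linarith)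
  have hψ_le : exp (-(k * T)) * u T ≤ a := by
    simpa [u] using hψ_anti ⟨le_rfl, hT⟩ ⟨hT, le_rfl⟩ hT
  calc f T ≤ u T := h T ⟨hT, le_rfl⟩
    _ = exp (-(k * T)) * u T * exp (k * T) := by
      rw [mul_comm, ← mul_assoc, ← exp_add, add_neg_cancel, exp_zero, one_mul]
    _ ≤ a * exp (k * T) := by gcongr

theorem StateEqn.le_mul_exp {r ρ x : ℝ} {c X : ℝ → ℝ} (hX : StateEqn r ρ x c X)
    (hk : 0 ≤ r + ρ) (hx : 0 ≤ x) (hcons : ∀ t, 0 ≤ t → 0 ≤ (1 + ρ * X t) * c t)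
    {T : ℝ} (hT : 0 ≤ T) : X T ≤ x * exp ((r + ρ) * T) := by
  by_cases hint : IntervalIntegrable (fun u => (r + ρ) * X u - (1 + ρ * X u) * c u) volume 0 T
  · have hXc : ContinuousOn X (Icc 0 T) := by
      have := intervalIntegral.continuousOn_primitive_interval' hint left_mem_uIcc
      rw [uIcc_of_le hT] at this
      exact (continuousOn_const.add this).congr fun t ht => hX t ht.1
    refine le_mul_exp_of_le_add_integral hk hT hXc fun t ht => ?_
    rw [← intervalIntegral.integral_const_mul, hX t ht.1]
    gcongr
    refine intervalIntegral.integral_mono_on ht.1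
      (hint.mono_set ?_) ?_ fun s hs => by linarith [hcons s hs.1]
    · rw [uIcc_of_le ht.1, uIcc_of_le hT]
      exact Icc_subset_Icc le_rfl ht.2
    · exact ContinuousOn.intervalIntegrable_of_Icc ht.1
        (continuousOn_const.mul (hXc.mono (Icc_subset_Icc le_rfl ht.2)))
  · -- the junk value `0` of a non-integrable interval integral gives `X T = x`
    rw [hX T hT, intervalIntegral.integral_undef hint, add_zero]
    exact le_mul_of_one_le_right hx (one_le_exp (by positivity))

theorem antitoneOn_sub_mul_log_of_deriv_le {v : ℝ → ℝ} {ρ K ξ₀ : ℝ} (hρ : 0 < ρ)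
    (hξ₀ : 0 ≤ ξ₀) (hdiff : ∀ ξ, ξ₀ ≤ ξ → DifferentiableAt ℝ v ξ)
    (hderiv : ∀ ξ, ξ₀ < ξ → deriv v ξ ≤ K / (1 + ρ * ξ)) :
    AntitoneOn (fun ξ => v ξ - K / ρ * log (1 + ρ * ξ)) (Ici ξ₀) := by
  have hlog : ∀ ξ, ξ₀ ≤ ξ →
      HasDerivAt (fun ξ => log (1 + ρ * ξ)) (ρ / (1 + ρ * ξ)) ξ := fun ξ hξ =>
    (((hasDerivAt_id ξ).const_mul ρ).const_add 1).log (by simp only [id]; nlinarith) |>.congr_deriv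
      (by simp)
  have hw : ∀ ξ, ξ₀ ≤ ξ → HasDerivAt (fun ξ => v ξ - K / ρ * log (1 + ρ * ξ))
      (deriv v ξ - K / (1 + ρ * ξ)) ξ := fun ξ hξ =>
    ((hdiff ξ hξ).hasDerivAt.sub ((hlog ξ hξ).const_mul (K / ρ))).congr_deriv
      (by field_simp)
  refine antitoneOn_of_deriv_nonpos (convex_Ici ξ₀)
    (fun ξ hξ => (hw ξ hξ).continuousAt.continuousWithinAt) (fun ξ hξ => ?_) (fun ξ hξ => ?_)
    <;> rw [interior_Ici] at hξ
  · exact (hw ξ (le_of_lt hξ)).differentiableAt.differentiableWithinAt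
  · rw [(hw ξ (le_of_lt hξ)).deriv]
    linarith [hderiv ξ hξ]

theorem le_add_mul_log_of_deriv_le {v : ℝ → ℝ} {a ρ K ξ₀ : ℝ} (hρ : 0 < ρ) (hK : 0 ≤ K)
    (hmono : MonotoneOn v (Ici a)) (haξ₀ : a ≤ ξ₀) (hξ₀ : 0 ≤ ξ₀)
    (hdiff : ∀ ξ, ξ₀ ≤ ξ → DifferentiableAt ℝ v ξ)
    (hderiv : ∀ ξ, ξ₀ < ξ → deriv v ξ ≤ K / (1 + ρ * ξ)) :
    ∀ ξ, a ≤ ξ → 0 ≤ ξ → v ξ ≤ v ξ₀ + K / ρ * log (1 + ρ * ξ) := by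
  have hlog : ∀ η, 0 ≤ η → 0 ≤ K / ρ * log (1 + ρ * η) := fun η hη =>
    mul_nonneg (by positivity) (log_nonneg (by nlinarith))
  intro ξ haξ hξ
  rcases le_total ξ ξ₀ with hle | hle
  · linarith [hmono haξ haξ₀ hle, hlog ξ hξ]
  · linarith [antitoneOn_sub_mul_log_of_deriv_le hρ hξ₀ hdiff hderiv self_mem_Ici hle hle,
      hlog ξ₀ hξ₀]

theorem log_one_add_mul_le_of_le_mul_exp {ρ x y s : ℝ} (hρ : 0 ≤ ρ) (hx : 0 ≤ x) (hy : 0 ≤ y)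
    (hs : 0 ≤ s) (hyx : y ≤ x * exp s) : log (1 + ρ * y) ≤ log (1 + ρ * x) + s := by
  rw [← log_exp s, ← log_mul (by positivity) (exp_pos s).ne']
  refine log_le_log (by positivity) ?_
  nlinarith [one_le_exp hs, mul_le_mul_of_nonneg_left hyx hρ]

theorem tendsto_exp_neg_mul_mul_of_le_of_le {g : ℝ → ℝ} {δ L A B : ℝ} (hδ : 0 < δ)
    (hlow : ∀ᶠ T in atTop, L ≤ g T) (hup : ∀ᶠ T in atTop, g T ≤ A + B * T) :
    Tendsto (fun T => exp (-(δ * T)) * g T) atTop (𝓝 0) := by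
  have hdecay (s : ℝ) : Tendsto (fun T : ℝ => T ^ s * exp (-(δ * T))) atTop (𝓝 0) := by
    simpa only [neg_mul] using tendsto_rpow_mul_exp_neg_mul_atTop_nhds_zero s δ hδ
  have hlow' : Tendsto (fun T => exp (-(δ * T)) * L) atTop (𝓝 0) := by
    simpa using (hdecay 0).mul_const L
  have hup' : Tendsto (fun T => exp (-(δ * T)) * (A + B * T)) atTop (𝓝 0) := by
    have := ((hdecay 0).const_mul A).add ((hdecay 1).const_mul B)
    simp only [rpow_zero, rpow_one, mul_zero, add_zero] at this
    exact this.congr fun T => by ring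
  exact tendsto_of_tendsto_of_tendsto_of_le_of_le' hlow' hup'
    (hlow.mono fun T hT => by gcongr) (hup.mono fun T hT => by gcongr)

theorem transversality_general (r ρ α δ γ x xα : ℝ)
    (hr : 0 < r) (hρ : 0 < ρ) (hα : α ∈ Set.Ioc (0:ℝ) 1)
    (hδ : 0 < δ)
    (hx : α / (r + ρ * (1 - α)) ≤ x)
    (v : ℝ → ℝ)
    (hv_mono : MonotoneOn v (Set.Ici (α / (r + ρ * (1 - α)))))
    (hcases :
      (1 < γ ∧ ∀ ξ : ℝ, α / (r + ρ * (1 - α)) ≤ ξ →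
        α ^ (1 - γ) / (δ * (1 - γ)) ≤ v ξ ∧ v ξ < 0) ∨
      (γ < 1 ∧
        (∀ ξ : ℝ, α / (r + ρ * (1 - α)) < ξ → ContDiffAt ℝ 1 v ξ) ∧
        v (α / (r + ρ * (1 - α))) = α ^ (1 - γ) / (δ * (1 - γ)) ∧
        (∀ ξ : ℝ, xα < ξ →
          0 < deriv v ξ ∧ deriv v ξ < α ^ (-γ) / (1 + ρ * ξ))))
    (c X : ℝ → ℝ)
    (hadm : Admissible r ρ α (α / (r + ρ * (1 - α))) x c X) :
    Filter.Tendsto (fun T => Real.exp (-(δ * T)) * v (X T)) Filter.atTop (𝓝 0) := by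
  obtain ⟨hα0, hα1⟩ := hα
  obtain ⟨-, hc, -, hstate, hX⟩ := hadm
  set xl := α / (r + ρ * (1 - α))
  have hxl : 0 < xl := div_pos hα0 (by nlinarith [hα0, hα1])
  have hXexp (T : ℝ) (hT : 0 ≤ T) : X T ≤ x * exp ((r + ρ) * T) :=
    hstate.le_mul_exp (by positivity) (hxl.le.trans hx)
      (fun t ht => mul_nonneg (by nlinarith [hX t ht]) (hα0.le.trans (hc t ht))) hT
  obtain ⟨A, B, hAB⟩ : ∃ A B : ℝ, ∀ T, 0 ≤ T → v (X T) ≤ A + B * T := by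
    rcases hcases with ⟨-, hneg⟩ | ⟨-, hC1, -, hderiv⟩
    · exact ⟨0, 0, fun T hT => by simpa using (hneg _ (hX T hT)).2.le⟩
    · set ξ₀ := max xα xl + 1
      have hξ₀ : xα < ξ₀ ∧ xl < ξ₀ := by
        constructor <;> linarith [le_max_left xα xl, le_max_right xα xl]
      have hlog := le_add_mul_log_of_deriv_le hρ (by positivity) hv_mono
        hξ₀.2.le (hxl.trans hξ₀.2).le
        (fun ξ hξ => (hC1 ξ (hξ₀.2.trans_le hξ)).differentiableAt one_ne_zero)
        (fun ξ hξ => (hderiv ξ (hξ₀.1.trans hξ)).2.le)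
      refine ⟨v ξ₀ + α ^ (-γ) / ρ * log (1 + ρ * x), α ^ (-γ) / ρ * (r + ρ), fun T hT => ?_⟩
      calc v (X T) ≤ v ξ₀ + α ^ (-γ) / ρ * log (1 + ρ * X T) :=
            hlog _ (hX T hT) (hxl.le.trans (hX T hT))
        _ ≤ v ξ₀ + α ^ (-γ) / ρ * (log (1 + ρ * x) + (r + ρ) * T) := by
            gcongr
            exact log_one_add_mul_le_of_le_mul_exp hρ.le (hxl.le.trans hx)
              (hxl.le.trans (hX T hT)) (by positivity) (hXexp T hT)
        _ = _ := by ring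
  exact tendsto_exp_neg_mul_mul_of_le_of_le hδ
    (eventually_atTop.2 ⟨0, fun T hT => hv_mono self_mem_Ici (hX T hT) (hX T hT)⟩)
    (eventually_atTop.2 ⟨0, hAB⟩)

/-- Lemma D.1, transversality: under either of the stated
conditions on `v`, for every admissible control, `e^{-δT} v(X(T)) → 0`. -/
theorem transversality (r ρ α δ γ x xα : ℝ)
    (hr : 0 < r) (hρ : 0 < ρ) (hα : α ∈ Set.Ioc (0:ℝ) 1)
    (hδ : 0 < δ) (hγ : 0 < γ) (hγ1 : γ ≠ 1)
    (hx : α / (r + ρ * (1 - α)) ≤ x) (hxα : α / (r + ρ * (1 - α)) ≤ xα)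
    (v : ℝ → ℝ)
    (hv_mono : MonotoneOn v (Set.Ici (α / (r + ρ * (1 - α)))))
    (hcases :
      (1 < γ ∧ ∀ ξ : ℝ, α / (r + ρ * (1 - α)) ≤ ξ →
        α ^ (1 - γ) / (δ * (1 - γ)) ≤ v ξ ∧ v ξ < 0) ∨
      (γ < 1 ∧
        (∀ ξ : ℝ, α / (r + ρ * (1 - α)) < ξ → ContDiffAt ℝ 1 v ξ) ∧
        v (α / (r + ρ * (1 - α))) = α ^ (1 - γ) / (δ * (1 - γ)) ∧
        (∀ ξ : ℝ, xα < ξ →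
          0 < deriv v ξ ∧ deriv v ξ < α ^ (-γ) / (1 + ρ * ξ))))
    (c X : ℝ → ℝ)
    (hadm : Admissible r ρ α (α / (r + ρ * (1 - α))) x c X) :
    Filter.Tendsto (fun T => Real.exp (-(δ * T)) * v (X T)) Filter.atTop (𝓝 0) :=
  transversality_general r ρ α δ γ x xα hr hρ hα hδ hx v hv_mono hcases c X hadm
end

section
/- Let r>0, ρ>0, δ>0, γ>0 with γ≠1, and a>0. Suppose ψ:(0,a]→(0,∞) is differentiable on (0,a), satisfies ψ'(y) = (y − (δ/(r+ρ))ψ(y)) / [(ρ/(r+ρ))((r+ρ−δ)/ρ − ψ(y)^{−1/γ})·y] for all 0<y<a (with the denominator nonzero there), lim_{y→0⁺} ψ(y) = 0, the map y ↦ ψ(y)/y is monotone on (0,a], and there is a constant K > 1 with ψ(y)/y > K for all y ∈ (0,a]. Then lim_{y→0⁺} ψ(y)/y = +∞. -/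
open Topology

/-- L'Hôpital-type step in Proposition 3.3: for a solution `ψ`
of the inverse dual ODE with `ψ(0+) = 0`, if `ψ(y)/y` is monotone and bounded
below by a constant `K > 1`, then `ψ(y)/y → +∞` as `y → 0+`. -/
theorem psi_ratio_blowup (r ρ δ γ a : ℝ)
    (hr : 0 < r) (hρ : 0 < ρ) (hδ : 0 < δ) (hγ : 0 < γ) (hγ1 : γ ≠ 1)
    (ha : 0 < a)
    (ψ : ℝ → ℝ)
    (hψ_pos : ∀ y ∈ Set.Ioc (0:ℝ) a, 0 < ψ y)
    (hden : ∀ y ∈ Set.Ioo (0:ℝ) a, (r + ρ - δ) / ρ - (ψ y) ^ (-(1 / γ)) ≠ 0)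
    (hψ_ode : ∀ y ∈ Set.Ioo (0:ℝ) a,
      HasDerivAt ψ
        ((y - δ / (r + ρ) * ψ y) /
          (ρ / (r + ρ) * ((r + ρ - δ) / ρ - (ψ y) ^ (-(1 / γ))) * y)) y)
    (hψ_lim : Filter.Tendsto ψ (𝓝[>] (0:ℝ)) (𝓝 0))
    (hmono : MonotoneOn (fun y => ψ y / y) (Set.Ioc 0 a) ∨
      AntitoneOn (fun y => ψ y / y) (Set.Ioc 0 a))
    (K : ℝ) (hK : 1 < K)
    (hKlt : ∀ y ∈ Set.Ioc (0:ℝ) a, K < ψ y / y) :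
    Filter.Tendsto (fun y => ψ y / y) (𝓝[>] (0:ℝ)) Filter.atTop := by
  have hIoc_mem : Set.Ioc (0:ℝ) a ∈ 𝓝[>] (0:ℝ) :=
    Ioc_mem_nhdsGT_of_mem ⟨le_refl 0, ha⟩
  have hrρ : 0 < r + ρ := by linarith
  -- The key claim: the ratio cannot tend to a finite limit.
  have key : ∀ L : ℝ, Filter.Tendsto (fun y => ψ y / y) (𝓝[>] (0:ℝ)) (𝓝 L) → False := by
    intro L hL
    -- K ≤ L
    have hKL : K ≤ L := by
      refine ge_of_tendsto hL ?_
      filter_upwards [hIoc_mem] with y hy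
      exact (hKlt y hy).le
    -- ψ tends to 0 within positives
    have hψin : Filter.Tendsto ψ (𝓝[>] (0:ℝ)) (𝓝[>] (0:ℝ)) := by
      rw [tendsto_nhdsWithin_iff]
      refine ⟨hψ_lim, ?_⟩
      filter_upwards [hIoc_mem] with y hy
      exact hψ_pos y hy
    -- ψ ^ (-(1/γ)) → ∞
    have hγinv : (0:ℝ) < 1 / γ := by positivity
    have hpow0 : Filter.Tendsto (fun x : ℝ => x ^ (1 / γ)) (𝓝[>] (0:ℝ)) (𝓝[>] (0:ℝ)) := by
      rw [tendsto_nhdsWithin_iff]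
      constructor
      · have hc := (Real.continuousAt_rpow_const 0 (1 / γ) (Or.inr hγinv.le)).continuousWithinAt
          (s := Set.Ioi (0:ℝ))
        simp only [ContinuousWithinAt] at hc
        rwa [Real.zero_rpow (ne_of_gt hγinv)] at hc
      · filter_upwards [self_mem_nhdsWithin] with x hx
        exact Real.rpow_pos_of_pos hx _
    have hrpow : Filter.Tendsto (fun y => (ψ y) ^ (-(1 / γ))) (𝓝[>] (0:ℝ)) Filter.atTop := by
      have h1 : Filter.Tendsto (fun y => ((ψ y) ^ (1 / γ))⁻¹) (𝓝[>] (0:ℝ)) Filter.atTop :=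
        (hpow0.comp hψin).inv_tendsto_nhdsGT_zero
      refine h1.congr' ?_
      filter_upwards [hIoc_mem] with y hy
      rw [Real.rpow_neg (hψ_pos y hy).le]
    -- The denominator factor's negative tends to +∞
    have hbpos : 0 < ρ / (r + ρ) := by positivity
    have hdenTop : Filter.Tendsto
        (fun y => ρ / (r + ρ) * ((ψ y) ^ (-(1 / γ)) - (r + ρ - δ) / ρ))
        (𝓝[>] (0:ℝ)) Filter.atTop := by
      refine Filter.Tendsto.const_mul_atTop hbpos ?_
      exact Filter.tendsto_atTop_add_const_right _ _ hrpow
    -- The numerator tends to a finite limit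
    have hnum : Filter.Tendsto (fun y => -(1 - δ / (r + ρ) * (ψ y / y)))
        (𝓝[>] (0:ℝ)) (𝓝 (-(1 - δ / (r + ρ) * L))) := by
      exact ((tendsto_const_nhds.sub (hL.const_mul _))).neg
    -- hence the RHS of the ODE tends to 0
    have hf'0 : Filter.Tendsto
        (fun y => (y - δ / (r + ρ) * ψ y) /
          (ρ / (r + ρ) * ((r + ρ - δ) / ρ - (ψ y) ^ (-(1 / γ))) * y))
        (𝓝[>] (0:ℝ)) (𝓝 0) := by
      have h0 := hnum.div_atTop hdenTop
      refine h0.congr' ?_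
      filter_upwards [self_mem_nhdsWithin] with y hy
      have hy0 : (y:ℝ) ≠ 0 := ne_of_gt hy
      have e1 : (y - δ / (r + ρ) * ψ y) / y = 1 - δ / (r + ρ) * (ψ y / y) := by
        field_simp
      calc -(1 - δ / (r + ρ) * (ψ y / y)) /
            (ρ / (r + ρ) * ((ψ y) ^ (-(1 / γ)) - (r + ρ - δ) / ρ))
          = ((y - δ / (r + ρ) * ψ y) / y) /
            (ρ / (r + ρ) * ((r + ρ - δ) / ρ - (ψ y) ^ (-(1 / γ)))) := by
            rw [e1]
            rw [show ρ / (r + ρ) * ((ψ y) ^ (-(1 / γ)) - (r + ρ - δ) / ρ)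
              = -(ρ / (r + ρ) * ((r + ρ - δ) / ρ - (ψ y) ^ (-(1 / γ)))) by ring]
            rw [div_neg, neg_div, neg_neg]
        _ = (y - δ / (r + ρ) * ψ y) /
            (ρ / (r + ρ) * ((r + ρ - δ) / ρ - (ψ y) ^ (-(1 / γ))) * y) := by
            rw [div_div, mul_comm y _]
    -- L'Hôpital's rule: ψ(y)/y → 0
    have hlhop : Filter.Tendsto (fun y => ψ y / y) (𝓝[>] (0:ℝ)) (𝓝 0) := by
      have := HasDerivAt.lhopital_zero_right_on_Ioo (l := 𝓝 0) (f := ψ) (g := fun x => x)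
        (f' := fun y => (y - δ / (r + ρ) * ψ y) /
          (ρ / (r + ρ) * ((r + ρ - δ) / ρ - (ψ y) ^ (-(1 / γ))) * y))
        (g' := fun _ => (1:ℝ)) ha hψ_ode
        (fun x _ => hasDerivAt_id x) (fun x _ => one_ne_zero)
        hψ_lim ?_ ?_
      · exact this
      · exact Filter.tendsto_id.mono_left nhdsWithin_le_nhds
      · simpa using hf'0
    have : L = 0 := tendsto_nhds_unique hL hlhop
    rw [this] at hKL
    linarith
  rcases hmono with hm | hm
  · -- monotone case: ratio has a finite limit at 0+, contradiction
    exfalso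
    have hm' : MonotoneOn (fun y => ψ y / y) (Set.Ioo 0 a) :=
      hm.mono Set.Ioo_subset_Ioc_self
    have hbdd : BddBelow ((fun y => ψ y / y) '' Set.Ioo 0 a) := by
      refine ⟨K, ?_⟩
      rintro _ ⟨y, hy, rfl⟩
      exact (hKlt y (Set.Ioo_subset_Ioc_self hy)).le
    have hne : (Set.Ioo (0:ℝ) a).Nonempty := Set.nonempty_Ioo.2 ha
    exact key _ (MonotoneOn.tendsto_nhdsWithin_Ioo_right hne hm' hbdd)
  · -- antitone case
    by_cases hbdd : BddAbove ((fun y => ψ y / y) '' Set.Ioo 0 a)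
    · exfalso
      have hm' : AntitoneOn (fun y => ψ y / y) (Set.Ioo 0 a) :=
        hm.mono Set.Ioo_subset_Ioc_self
      have hne : (Set.Ioo (0:ℝ) a).Nonempty := Set.nonempty_Ioo.2 ha
      exact key _ (AntitoneOn.tendsto_nhdsWithin_Ioo_right hne hm' hbdd)
    · -- unbounded above: the antitone ratio tends to +∞ at 0+
      rw [Filter.tendsto_atTop]
      intro M
      rcases not_bddAbove_iff.1 hbdd M with ⟨_, ⟨x, hx, rfl⟩, hMx⟩
      have hx' : x ∈ Set.Ioc (0:ℝ) a := Set.Ioo_subset_Ioc_self hx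
      filter_upwards [Ioo_mem_nhdsGT hx.1] with y hy
      have hy' : y ∈ Set.Ioc (0:ℝ) a := ⟨hy.1, hy.2.le.trans hx'.2⟩
      exact hMx.le.trans (hm hy' hx' hy.2.le)
end

section
/- Let r>0, ρ>0, δ>0, γ>0 with γ≠1, x_α > −1/ρ, and set x₀ := (r+ρ−δ)/(δρ). Let v be twice differentiable on (x_α,∞) with v'(x) > 0, satisfying −(r+ρ)x·v'(x) + δ·v(x) = (γ/(1−γ))·((1+ρx)v'(x))^{1−1/γ} for all x > x_α, and define c*(x) := ((1+ρx)v'(x))^{−1/γ}. Then c* satisfies, for all x > x_α, (c*(x) − (r+ρ)x/(1+ρx))·c*'(x) = (δρ/γ)·((x − x₀)/(1+ρx)²)·c*(x). -/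
/-!
Write `q = (1+ρx)v'`, so `c* = q^(-1/γ)` and `c*' = -(1/γ) c* q'/q`. Differentiating the HJB
equation gives `c* q' = (r+ρ-δ)v' + (r+ρ)x v''`; substituting `q' = ρv' + (1+ρx)v''` into
`(c* - (r+ρ)x/(1+ρx)) c*'` leaves `(δρ/γ)(x - x₀) c*/(1+ρx)²`.
-/

open Set Filter Topology

section

variable {ρ : ℝ} {v : ℝ → ℝ} {x : ℝ}

lemma hasDerivAt_one_add_mul_deriv (hv₂ : DifferentiableAt ℝ (deriv v) x) :
    HasDerivAt (fun s => (1 + ρ * s) * deriv v s)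
      (ρ * deriv v x + (1 + ρ * x) * deriv (deriv v) x) x := by
  have h : HasDerivAt (fun s => 1 + ρ * s) ρ x := by
    simpa using ((hasDerivAt_id x).const_mul ρ).const_add 1
  simpa [mul_comm] using h.fun_mul hv₂.hasDerivAt

lemma hasDerivAt_rpow_one_add_mul_deriv {a : ℝ} (hv₂ : DifferentiableAt ℝ (deriv v) x)
    (hq : 0 < (1 + ρ * x) * deriv v x) :
    HasDerivAt (fun s => ((1 + ρ * s) * deriv v s) ^ a)
      (a * ((1 + ρ * x) * deriv v x) ^ a * (ρ * deriv v x + (1 + ρ * x) * deriv (deriv v) x)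
        / ((1 + ρ * x) * deriv v x)) x := by
  convert (hasDerivAt_one_add_mul_deriv hv₂).rpow_const (p := a) (Or.inl hq.ne') using 1
  rw [Real.rpow_sub_one hq.ne']
  ring

/-- Since `γ/(1-γ) · (1-1/γ) = -1`, the derivative of the right-hand side of the HJB equation
is `-c* · q'`. -/
lemma cstar_mul_deriv_eq_of_hjb {r δ γ : ℝ} (hγ : γ ≠ 0) (hγ1 : γ ≠ 1)
    (hv : DifferentiableAt ℝ v x) (hv₂ : DifferentiableAt ℝ (deriv v) x)
    (hq : 0 < (1 + ρ * x) * deriv v x)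
    (hHJB : (fun s => -(r + ρ) * s * deriv v s + δ * v s)
      =ᶠ[𝓝 x] fun s => γ / (1 - γ) * ((1 + ρ * s) * deriv v s) ^ (1 - 1 / γ)) :
    ((1 + ρ * x) * deriv v x) ^ (-(1 / γ)) * (ρ * deriv v x + (1 + ρ * x) * deriv (deriv v) x)
      = (r + ρ - δ) * deriv v x + (r + ρ) * x * deriv (deriv v) x := by
  have hL : HasDerivAt (fun s => -(r + ρ) * s * deriv v s + δ * v s)
      (-(r + ρ) * (deriv v x + x * deriv (deriv v) x) + δ * deriv v x) x := by
    have h := (((hasDerivAt_id' x).fun_mul hv₂.hasDerivAt).const_mul (-(r + ρ))).fun_add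
      (hv.hasDerivAt.const_mul δ)
    simpa [mul_assoc] using h
  have hR := (hasDerivAt_rpow_one_add_mul_deriv (a := 1 - 1 / γ) hv₂ hq).const_mul (γ / (1 - γ))
  have h := (hL.congr_of_eventuallyEq hHJB.symm).unique hR
  have hpow : ((1 + ρ * x) * deriv v x) ^ (1 - 1 / γ)
      = (1 + ρ * x) * deriv v x * ((1 + ρ * x) * deriv v x) ^ (-(1 / γ)) := by
    rw [sub_eq_add_neg, Real.rpow_add hq, Real.rpow_one]
  rw [hpow] at h
  generalize ((1 + ρ * x) * deriv v x) ^ (-(1 / γ)) = c at h ⊢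
  have h1γ : 1 - γ ≠ 0 := sub_ne_zero.mpr hγ1.symm
  have hA : 1 + ρ * x ≠ 0 := left_ne_zero_of_mul hq.ne'
  have hp : deriv v x ≠ 0 := right_ne_zero_of_mul hq.ne'
  field_simp at h
  apply mul_left_cancel₀ h1γ
  linear_combination h

end

lemma cstar_ode_of_cstar_mul_eq {r ρ δ γ x p p₂ c : ℝ} (hρ : ρ ≠ 0) (hδ : δ ≠ 0) (hγ : γ ≠ 0)
    (hA : 1 + ρ * x ≠ 0) (hp : p ≠ 0)
    (h : c * (ρ * p + (1 + ρ * x) * p₂) = (r + ρ - δ) * p + (r + ρ) * x * p₂) :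
    (c - (r + ρ) * x / (1 + ρ * x)) *
        (-(1 / γ) * c * (ρ * p + (1 + ρ * x) * p₂) / ((1 + ρ * x) * p))
      = δ * ρ / γ * ((x - (r + ρ - δ) / (δ * ρ)) / (1 + ρ * x) ^ 2) * c := by
  field_simp
  linear_combination (-(1 + ρ * x) * c) * h

theorem cstar_ode_general (r ρ δ γ xα : ℝ)
    (hρ : 0 < ρ) (hδ : 0 < δ) (hγ : 0 < γ) (hγ1 : γ ≠ 1)
    (hxα : -(1 / ρ) < xα)
    (v : ℝ → ℝ)
    (hv_diff : ∀ x ∈ Set.Ioi xα, DifferentiableAt ℝ v x)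
    (hv_diff2 : ∀ x ∈ Set.Ioi xα, DifferentiableAt ℝ (deriv v) x)
    (hv_pos : ∀ x ∈ Set.Ioi xα, 0 < deriv v x)
    (hODE : ∀ x ∈ Set.Ioi xα,
      -(r + ρ) * x * deriv v x + δ * v x
        = γ / (1 - γ) * ((1 + ρ * x) * deriv v x) ^ (1 - 1 / γ)) :
    ∀ x ∈ Set.Ioi xα,
      (((1 + ρ * x) * deriv v x) ^ (-(1 / γ)) - (r + ρ) * x / (1 + ρ * x)) *
          deriv (fun s => ((1 + ρ * s) * deriv v s) ^ (-(1 / γ))) x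
        = δ * ρ / γ * ((x - (r + ρ - δ) / (δ * ρ)) / (1 + ρ * x) ^ 2) *
          ((1 + ρ * x) * deriv v x) ^ (-(1 / γ)) := by
  intro x hx
  have hA : 0 < 1 + ρ * x := by
    have : ρ * (-(1 / ρ)) < ρ * x := mul_lt_mul_of_pos_left (hxα.trans hx) hρ
    rw [mul_neg, mul_one_div_cancel hρ.ne'] at this
    linarith
  have hq : 0 < (1 + ρ * x) * deriv v x := mul_pos hA (hv_pos x hx)
  have hHJB := eventuallyEq_of_mem (Ioi_mem_nhds hx) hODE
  rw [(hasDerivAt_rpow_one_add_mul_deriv (hv_diff2 x hx) hq).deriv]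
  exact cstar_ode_of_cstar_mul_eq hρ.ne' hδ.ne' hγ.ne' hA.ne' (hv_pos x hx).ne'
    (cstar_mul_deriv_eq_of_hjb hγ.ne' hγ1 (hv_diff x hx) (hv_diff2 x hx) hq hHJB)

/-- derivation of the ODE for the optimal consumption feedback:
if `v` is twice differentiable with `v' > 0` and solves the HJB equation above the
free boundary, then `c*(x) = ((1+ρx)v'(x))^{-1/γ}` satisfies
`(c*(x) - (r+ρ)x/(1+ρx)) c*'(x) = (δρ/γ)((x-x₀)/(1+ρx)²) c*(x)`. -/
theorem cstar_ode (r ρ δ γ xα : ℝ)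
    (hr : 0 < r) (hρ : 0 < ρ) (hδ : 0 < δ) (hγ : 0 < γ) (hγ1 : γ ≠ 1)
    (hxα : -(1 / ρ) < xα)
    (v : ℝ → ℝ)
    (hv_diff : ∀ x ∈ Set.Ioi xα, DifferentiableAt ℝ v x)
    (hv_diff2 : ∀ x ∈ Set.Ioi xα, DifferentiableAt ℝ (deriv v) x)
    (hv_pos : ∀ x ∈ Set.Ioi xα, 0 < deriv v x)
    (hODE : ∀ x ∈ Set.Ioi xα,
      -(r + ρ) * x * deriv v x + δ * v x
        = γ / (1 - γ) * ((1 + ρ * x) * deriv v x) ^ (1 - 1 / γ)) :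
    ∀ x ∈ Set.Ioi xα,
      (((1 + ρ * x) * deriv v x) ^ (-(1 / γ)) - (r + ρ) * x / (1 + ρ * x)) *
          deriv (fun s => ((1 + ρ * s) * deriv v s) ^ (-(1 / γ))) x
        = δ * ρ / γ * ((x - (r + ρ - δ) / (δ * ρ)) / (1 + ρ * x) ^ 2) *
          ((1 + ρ * x) * deriv v x) ^ (-(1 / γ)) :=
  cstar_ode_general r ρ δ γ xα hρ hδ hγ hγ1 hxα v hv_diff hv_diff2 hv_pos hODE
end
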